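/- arXiv:2509.10070 — 7 statements merged into one kernel-verified Lean document; each statement's English description precedes it below -/
import Mathlib

section
/- Let G be a finite simple graph on a vertex set of n ≥ 2 elements, and let d₁ ≤ d₂ ≤ … ≤ d_n be its vertex degrees sorted in ascending order. For a permutation π of the vertex set, let P(π) denote the set of ordered pairs (u, v) of distinct vertices with π(u) < π(v) for which there exists a vertex w adjacent to both u and v such that no vertex x adjacent to w satisfies π(u) < π(x) < π(v). Then for every index t ∈ {1, …, n} with d_t ≥ 1, the average of |P(π)| over all n! permutations π is at most 4n + 2·(d₁ + d₂ + … + d_{t−1}) + (n − t) · n · ln(n) / d_t. -/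
/-!
Fix a permutation `π`. If `w` witnesses `(u, v) ∈ P(π)`, then `v` is the first neighbour of `w`
after `u` in the order `π`; so a pair is determined by `u` together with a witness `w ∼ u`, and
at most `min (deg u) L` pairs starting at `u` have `π v ≤ π u + L`. A longer pair forces the `L`
positions after `u` to contain no neighbour of `w`. For `L = ⌈(n - 1) min (ln n / d_t) 1⌉` and
`deg w ≥ d_t` this event has probability at most `(1 - L / (n - 1)) ^ (deg w - 1) ≤ e / deg w`,
so each of the `n - t + 1` vertices `w` of index at least `t` witnesses fewer than 3 long pairs
on average, while every other `w` witnesses at most `deg w`. Altogether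
`E |P(π)| ≤ 2 (d₁ + ⋯ + d_{t-1}) + (n - t + 1) (L + 3)`.
-/

/-- `P(π)`: the set of ordered pairs `(u, v)` of distinct vertices with `π u < π v`
such that some common neighbor `w` of `u` and `v` has no neighbor `x` with
`π u < π x < π v`. -/
def Ppairs {V : Type*} (G : SimpleGraph V) {n : ℕ} (π : V ≃ Fin n) : Set (V × V) :=
  {p | p.1 ≠ p.2 ∧ π p.1 < π p.2 ∧
    ∃ w : V, G.Adj w p.1 ∧ G.Adj w p.2 ∧
      ∀ x : V, G.Adj w x → ¬(π p.1 < π x ∧ π x < π p.2)}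

open Finset
open scoped Nat

section Bijections

variable {α β : Type*} [Fintype α] [DecidableEq α] [Fintype β] [DecidableEq β]

theorem card_equiv_eqOn_le (s : Finset α) (π₀ : α ≃ β) :
    #{π : α ≃ β | ∀ x ∈ s, π x = π₀ x} ≤ (Fintype.card α - #s)! := by
  calc #{π : α ≃ β | ∀ x ∈ s, π x = π₀ x}
      = Fintype.card {π : α ≃ β // ∀ x ∈ s, π x = π₀ x} := (Fintype.card_subtype _).symm
    _ ≤ Fintype.card {σ : Equiv.Perm α // ∀ x, ¬ x ∉ s → σ x = x} :=
        Fintype.card_le_of_injective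
          (fun π => ⟨π.1.trans π₀.symm, fun x hx => by simp [π.2 x (not_not.mp hx)]⟩)
          (fun π π' h => Subtype.ext <| Equiv.ext fun x =>
            π₀.symm.injective (Equiv.congr_fun (congrArg Subtype.val h) x))
    _ = Fintype.card (Equiv.Perm {x // x ∉ s}) :=
        Fintype.card_congr (Equiv.Perm.subtypeEquivSubtypePerm _).symm
    _ = (Fintype.card α - #s)! := by
        rw [Fintype.card_perm, Fintype.card_subtype_compl, Fintype.card_coe]

theorem card_le_card_image_mul_factorial {γ : Type*} [DecidableEq γ] (E : Finset (α ≃ β))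
    (s : Finset α) (f : (α ≃ β) → γ) (hf : ∀ π π', f π = f π' → ∀ x ∈ s, π x = π' x) :
    #E ≤ (Fintype.card α - #s)! * #(E.image f) := by
  refine card_le_mul_card_image E _ fun c hc => ?_
  obtain ⟨π₀, -, rfl⟩ := mem_image.mp hc
  refine le_trans (card_le_card fun π hπ => ?_) (card_equiv_eqOn_le s π₀)
  simp only [mem_filter, mem_univ, true_and] at hπ ⊢
  exact hf π π₀ hπ.2

theorem card_embedding_mapsTo_le {γ : Type*} [Fintype γ] (t : Finset β) :
    #{g : γ ↪ β | ∀ x, g x ∈ t} ≤ (#t).descFactorial (Fintype.card γ) := by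
  calc #{g : γ ↪ β | ∀ x, g x ∈ t}
      = Fintype.card {g : γ ↪ β // ∀ x, g x ∈ t} := (Fintype.card_subtype _).symm
    _ ≤ Fintype.card (γ ↪ t) :=
        Fintype.card_le_of_injective (fun g => g.1.codRestrict (t : Set β) g.2)
          (fun g g' h => Subtype.ext <| DFunLike.ext _ _ fun x =>
            congrArg Subtype.val (DFunLike.congr_fun h x))
    _ = (#t).descFactorial (Fintype.card γ) := by
        rw [Fintype.card_embedding_eq, Fintype.card_coe]

end Bijections

theorem Set.ncard_eq_sum_ncard_slice {α β : Type*} [Fintype α] [Fintype β] (s : Set (α × β)) :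
    s.ncard = ∑ a, {b | (a, b) ∈ s}.ncard := by
  classical
  simp only [Set.ncard_eq_toFinset_card', card_filter, Set.toFinset_ofPred]
  rw [← Fintype.sum_prod_type (fun p => if p ∈ s then 1 else 0), ← card_filter]
  congr 1; ext; simp

section GapAfter

variable {V : Type*} {n : ℕ}

def IsGapAfter (π : V ≃ Fin n) (N : Finset V) (L : ℕ) (u : V) : Prop :=
  (π u : ℕ) + L < n ∧ ∀ x ∈ N, ¬((π u : ℕ) < π x ∧ (π x : ℕ) ≤ π u + L)

instance (π : V ≃ Fin n) (N : Finset V) (L : ℕ) : DecidablePred (IsGapAfter π N L) :=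
  fun _ => by unfold IsGapAfter; infer_instance

theorem card_fin_notMem_Icc {a L : ℕ} (h : a + L < n) :
    #{b : Fin n | ¬(a ≤ (b : ℕ) ∧ (b : ℕ) ≤ a + L)} = n - 1 - L := by
  have : ({b : Fin n | ¬(a ≤ (b : ℕ) ∧ (b : ℕ) ≤ a + L)} : Finset (Fin n)) =
      (Icc (⟨a, by omega⟩ : Fin n) ⟨a + L, h⟩)ᶜ := by
    ext b; simp [Fin.le_def]
  rw [this, card_compl, Fintype.card_fin, Fin.card_Icc]
  dsimp only
  omega

theorem card_isGapAfter_le [Fintype V] [DecidableEq V] (N : Finset V) {u : V} (hu : u ∈ N)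
    (L : ℕ) :
    #{π : V ≃ Fin n | IsGapAfter π N L u} ≤
      (Fintype.card V - #N)! * (n * (n - 1 - L).descFactorial (#N - 1)) := by
  set S := N.erase u
  -- `π` is determined on `N` by `π u` and its restriction to `N \ {u}`, an embedding that
  -- avoids the `L + 1` positions `π u, …, π u + L`
  let f : (V ≃ Fin n) → Fin n × (S ↪ Fin n) :=
    fun π => (π u, (Function.Embedding.subtype _).trans π.toEmbedding)
  have hf : ∀ π π', f π = f π' → ∀ x ∈ N, π x = π' x := by
    intro π π' h x hx
    simp only [f, Prod.mk.injEq] at h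
    by_cases hxu : x = u
    · exact hxu ▸ h.1
    · exact DFunLike.congr_fun h.2 ⟨x, mem_erase.mpr ⟨hxu, hx⟩⟩
  refine (card_le_card_image_mul_factorial _ N f hf).trans (Nat.mul_le_mul_left _ ?_)
  let T : Finset (Fin n × (S ↪ Fin n)) :=
    {c | (c.1 : ℕ) + L < n ∧ ∀ x, ¬((c.1 : ℕ) ≤ c.2 x ∧ (c.2 x : ℕ) ≤ c.1 + L)}
  have himage : image f {π | IsGapAfter π N L u} ⊆ T := by
    intro c hc
    obtain ⟨π, hπ, rfl⟩ := mem_image.mp hc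
    obtain ⟨hroom, hgap⟩ := (mem_filter.mp hπ).2
    refine mem_filter.mpr ⟨mem_univ _, hroom, fun x hx => ?_⟩
    have hne : π x.1 ≠ π u := π.injective.ne (mem_erase.mp x.2).1
    exact hgap x.1 (mem_of_mem_erase x.2) ⟨lt_of_le_of_ne hx.1 (Fin.val_ne_of_ne hne.symm), hx.2⟩
  calc #(image f {π | IsGapAfter π N L u}) ≤ #T := card_le_card himage
    _ = ∑ a : Fin n, #{g : S ↪ Fin n | (a : ℕ) + L < n ∧
          ∀ x, ¬((a : ℕ) ≤ g x ∧ (g x : ℕ) ≤ a + L)} := by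
        simp only [T, card_filter, Fintype.sum_prod_type]
    _ ≤ ∑ _a : Fin n, (n - 1 - L).descFactorial (#N - 1) := by
        refine sum_le_sum fun a _ => ?_
        by_cases ha : (a : ℕ) + L < n
        · simp only [ha, true_and]
          simpa only [mem_filter, mem_univ, true_and, card_fin_notMem_Icc ha, Fintype.card_coe, S,
            card_erase_of_mem hu] using
            card_embedding_mapsTo_le (γ := S) {b : Fin n | ¬((a : ℕ) ≤ b ∧ (b : ℕ) ≤ a + L)}
        · simp [ha]
    _ = n * (n - 1 - L).descFactorial (#N - 1) := by simp

end GapAfter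

theorem Nat.descFactorial_mul_pow_le {a b : ℕ} (h : a ≤ b) :
    ∀ k, a.descFactorial k * b ^ k ≤ b.descFactorial k * a ^ k
  | 0 => by simp
  | k + 1 => by
    have step : (a - k) * b ≤ (b - k) * a := by
      rcases le_or_gt k a with hka | hka
      · obtain ⟨c, rfl⟩ := Nat.exists_eq_add_of_le hka
        obtain ⟨e, rfl⟩ := Nat.exists_eq_add_of_le h
        simp only [Nat.add_sub_cancel_left, Nat.add_assoc]
        nlinarith
      · simp [Nat.sub_eq_zero_of_le hka.le]
    calc a.descFactorial (k + 1) * b ^ (k + 1)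
        = ((a - k) * b) * (a.descFactorial k * b ^ k) := by
          rw [Nat.descFactorial_succ, pow_succ]; ring
      _ ≤ ((b - k) * a) * (b.descFactorial k * a ^ k) :=
          Nat.mul_le_mul step (Nat.descFactorial_mul_pow_le h k)
      _ = b.descFactorial (k + 1) * a ^ (k + 1) := by
          rw [Nat.descFactorial_succ, pow_succ]; ring

theorem natCast_mul_one_sub_pow_le_three {n D d : ℕ} {x : ℝ} (hD : 0 < D) (hDd : D ≤ d)
    (hdn : d ≤ n) (hx : min (Real.log n / D) 1 ≤ x) (hx1 : x ≤ 1) :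
    (d : ℝ) * (1 - x) ^ (d - 1) ≤ 3 := by
  rcases le_total (Real.log n / D) 1 with hy | hy
  · rw [min_eq_left hy] at hx
    have hDpos : (0 : ℝ) < D := by exact_mod_cast hD
    have hnpos : (0 : ℝ) < n := by exact_mod_cast hD.trans_le (hDd.trans hdn)
    have hx0 : 0 ≤ x := (div_nonneg (Real.log_natCast_nonneg n) hDpos.le).trans hx
    obtain ⟨k, rfl⟩ : ∃ k, d = k + 1 := ⟨d - 1, by omega⟩
    have hdecay : Real.exp (-x) ^ (k + 1) ≤ (n : ℝ)⁻¹ :=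
      calc Real.exp (-x) ^ (k + 1) ≤ Real.exp (-x) ^ D :=
            pow_le_pow_of_le_one (Real.exp_nonneg _) (by simpa using hx0) hDd
        _ = Real.exp (-(D * x)) := by rw [← Real.exp_nat_mul]; ring_nf
        _ ≤ Real.exp (-Real.log n) := by
            gcongr; rwa [div_le_iff₀' hDpos] at hx
        _ = (n : ℝ)⁻¹ := by rw [Real.exp_neg, Real.exp_log hnpos]
    calc ((k + 1 : ℕ) : ℝ) * (1 - x) ^ (k + 1 - 1)
        ≤ n * Real.exp (-x) ^ k := by
          refine mul_le_mul (by exact_mod_cast hdn) ?_ (by positivity) (by positivity)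
          simpa using pow_le_pow_left₀ (by linarith) (Real.one_sub_le_exp_neg x) k
      _ = n * (Real.exp x * Real.exp (-x) ^ (k + 1)) := by
          rw [pow_succ', ← mul_assoc (Real.exp x), ← Real.exp_add, add_neg_cancel, Real.exp_zero,
            one_mul]
      _ ≤ n * (Real.exp 1 * (n : ℝ)⁻¹) := by gcongr
      _ = Real.exp 1 := by field_simp
      _ ≤ 3 := by linarith [Real.exp_one_lt_d9]
  · obtain rfl : x = 1 := le_antisymm hx1 (min_eq_right hy ▸ hx)
    rcases d with _ | _ | d <;> simp

theorem natCast_mul_factorial_mul_descFactorial_le {n D d L : ℕ} (hD : 0 < D) (hDd : D ≤ d)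
    (hdn : d < n) (hLn : L ≤ n - 1) (hL : ((n : ℝ) - 1) * min (Real.log n / D) 1 ≤ L) :
    (d : ℝ) * ((n - d)! * (n * (n - 1 - L).descFactorial (d - 1))) ≤ 3 * n ! := by
  obtain ⟨k, rfl⟩ : ∃ k, d = k + 1 := ⟨d - 1, by omega⟩
  have hfact : (n - (k + 1))! * (n - 1).descFactorial k * n = n ! := by
    rw [show n - (k + 1) = n - 1 - k by omega, Nat.factorial_mul_descFactorial (by omega),
      mul_comm, Nat.mul_factorial_pred (by omega)]
  have hn1 : (0 : ℝ) < n - 1 := by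
    have : (k + 2 : ℝ) ≤ n := by exact_mod_cast hdn
    linarith
  have hcast1 : ((n - 1 : ℕ) : ℝ) = n - 1 := by rw [Nat.cast_sub (by omega), Nat.cast_one]
  have hcast : ((n - 1 - L : ℕ) : ℝ) = n - 1 - L := by rw [Nat.cast_sub hLn, hcast1]
  have hratio : ((n - 1 - L).descFactorial k : ℝ) ≤
      (n - 1).descFactorial k * (1 - L / (n - 1 : ℝ)) ^ k := by
    have h : ((n - 1 - L).descFactorial k : ℝ) * ((n - 1 : ℕ) : ℝ) ^ k ≤
        (n - 1).descFactorial k * ((n - 1 - L : ℕ) : ℝ) ^ k := by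
      exact_mod_cast Nat.descFactorial_mul_pow_le (Nat.sub_le (n - 1) L) k
    rw [hcast, hcast1] at h
    rwa [one_sub_div hn1.ne', div_pow, ← mul_div_assoc, le_div_iff₀ (by positivity)]
  have hkey : ((k + 1 : ℕ) : ℝ) * (1 - L / (n - 1 : ℝ)) ^ k ≤ 3 := by
    have hLn' : (L : ℝ) ≤ n - 1 := by rw [← hcast1]; exact_mod_cast hLn
    simpa using natCast_mul_one_sub_pow_le_three (x := L / (n - 1 : ℝ)) hD hDd hdn.le
      (by rwa [le_div_iff₀ hn1, mul_comm]) (by rwa [div_le_one hn1])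
  calc ((k + 1 : ℕ) : ℝ) * ((n - (k + 1))! * (n * (n - 1 - L).descFactorial (k + 1 - 1)))
      ≤ ((k + 1 : ℕ) : ℝ) * ((n - (k + 1))! * (n * ((n - 1).descFactorial k *
          (1 - L / (n - 1 : ℝ)) ^ k))) := by
        simp only [Nat.add_sub_cancel]; gcongr
    _ = ((n - (k + 1))! * (n - 1).descFactorial k * n : ℕ) *
          (((k + 1 : ℕ) : ℝ) * (1 - L / (n - 1 : ℝ)) ^ k) := by push_cast; ring
    _ ≤ n ! * 3 := by rw [hfact]; gcongr
    _ = 3 * n ! := mul_comm _ _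

section Witness

variable {V : Type*} {G : SimpleGraph V} {n : ℕ} {π : V ≃ Fin n}

variable (G π) in
def IsGapWitness (w u v : V) : Prop :=
  G.Adj w u ∧ G.Adj w v ∧ ∀ x, G.Adj w x → ¬(π u < π x ∧ π x < π v)

theorem IsGapWitness.right_unique {w u v v' : V} (h : IsGapWitness G π w u v)
    (h' : IsGapWitness G π w u v') (hv : π u < π v) (hv' : π u < π v') : v = v' := by
  rcases lt_trichotomy (π v) (π v') with hlt | heq | hgt
  · exact absurd ⟨hv, hlt⟩ (h'.2.2 v h.2.1)
  · exact π.injective heq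
  · exact absurd ⟨hv', hgt⟩ (h.2.2 v' h'.2.1)

theorem mem_Ppairs {u v : V} :
    (u, v) ∈ Ppairs G π ↔ π u < π v ∧ ∃ w, IsGapWitness G π w u v :=
  ⟨fun h => h.2, fun h => ⟨fun huv => ne_of_lt h.1 (congrArg π huv), h⟩⟩

variable (G π) in
theorem card_le_card_of_forall_isGapWitness (u : V) {s t : Finset V}
    (h : ∀ v ∈ s, π u < π v ∧ ∃ w ∈ t, IsGapWitness G π w u v) : #s ≤ #t :=
  card_le_card_of_forall_subsingleton (fun v w => IsGapWitness G π w u v)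
    (fun v hv => (h v hv).2)
    (fun _ _ _ hv _ hv' => hv.2.right_unique hv'.2 (h _ hv.1).1 (h _ hv'.1).1)

variable [Fintype V] [DecidableRel G.Adj]

theorem ncard_Ppairs_slice_le (L : ℕ) (u : V) :
    {v | (u, v) ∈ Ppairs G π}.ncard ≤
      min (G.degree u) L + #{w ∈ G.neighborFinset u | IsGapAfter π (G.neighborFinset w) L u} := by
  classical
  set s := {v | (u, v) ∈ Ppairs G π}.toFinset
  have hs : ∀ v ∈ s, π u < π v ∧ ∃ w, IsGapWitness G π w u v := by
    intro v hv; simpa [s, mem_Ppairs] using hv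
  rw [Set.ncard_eq_toFinset_card', ← card_filter_add_card_filter_not (fun v => (π v : ℕ) ≤ π u + L)]
  refine Nat.add_le_add (le_min ?_ ?_) ?_
  · refine card_le_card_of_forall_isGapWitness G π u fun v hv => ?_
    obtain ⟨hlt, w, hw⟩ := hs v (mem_of_mem_filter v hv)
    exact ⟨hlt, w, (G.mem_neighborFinset u w).mpr hw.1.symm, hw⟩
  · calc #{v ∈ s | (π v : ℕ) ≤ π u + L} ≤ #(Ioc (π u : ℕ) (π u + L)) := by
          refine card_le_card_of_injOn (fun v => (π v : ℕ)) (fun v hv => ?_)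
            (fun v _ v' _ h => π.injective (Fin.ext h))
          obtain ⟨hvs, hvL⟩ := mem_filter.mp hv
          exact mem_Ioc.mpr ⟨(hs v hvs).1, hvL⟩
      _ = L := by simp
  · refine card_le_card_of_forall_isGapWitness G π u fun v hv => ?_
    obtain ⟨hvs, hvL⟩ := mem_filter.mp hv
    obtain ⟨hlt, w, hw⟩ := hs v hvs
    refine ⟨hlt, w, mem_filter.mpr ⟨(G.mem_neighborFinset u w).mpr hw.1.symm, ?_, ?_⟩, hw⟩
    · exact lt_of_lt_of_le (not_le.mp hvL) (π v).isLt.le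
    · intro x hx hxL
      exact hw.2.2 x ((G.mem_neighborFinset w x).mp hx)
        ⟨Fin.lt_def.mpr hxL.1, Fin.lt_def.mpr (lt_of_le_of_lt hxL.2 (not_le.mp hvL))⟩

end Witness

section Expectation

variable {V : Type*} [Fintype V] (G : SimpleGraph V) [DecidableRel G.Adj] {n : ℕ}

def gapCount (π : V ≃ Fin n) (L : ℕ) : ℕ :=
  ∑ u, #{w ∈ G.neighborFinset u | IsGapAfter π (G.neighborFinset w) L u}

theorem ncard_Ppairs_le (π : V ≃ Fin n) (L : ℕ) :
    (Ppairs G π).ncard ≤ ∑ u, min (G.degree u) L + gapCount G π L := by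
  rw [Set.ncard_eq_sum_ncard_slice, gapCount, ← sum_add_distrib]
  exact sum_le_sum fun u _ => ncard_Ppairs_slice_le L u

variable [DecidableEq V]

theorem sum_min_degree_le (Hi : Finset V) (L : ℕ) :
    ∑ u, min (G.degree u) L ≤ ∑ u ∈ Hiᶜ, G.degree u + #Hi * L := by
  rw [← sum_add_sum_compl Hi, add_comm, ← smul_eq_mul, ← sum_const]
  exact add_le_add (sum_le_sum fun _ _ => min_le_left _ _) (sum_le_sum fun _ _ => min_le_right _ _)

theorem sum_gapCount_eq (L : ℕ) :
    ∑ π : V ≃ Fin n, gapCount G π L =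
      ∑ w, ∑ u ∈ G.neighborFinset w, #{π : V ≃ Fin n | IsGapAfter π (G.neighborFinset w) L u} := by
  simp only [gapCount, card_filter, G.neighborFinset_eq_filter, sum_filter]
  rw [sum_comm]
  simp_rw [sum_comm (s := (univ : Finset (V ≃ Fin n)))]
  rw [sum_comm]
  simp [G.adj_comm, sum_ite_irrel]

theorem sum_card_isGapAfter_le_degree_mul (hn : Fintype.card V = n) (w : V) (L : ℕ) :
    ∑ u ∈ G.neighborFinset w, #{π : V ≃ Fin n | IsGapAfter π (G.neighborFinset w) L u} ≤
      G.degree w * n ! := by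
  calc _ ≤ ∑ _u ∈ G.neighborFinset w, n ! := sum_le_sum fun _ _ =>
          (card_filter_le _ _).trans_eq <| by
            rw [card_univ, Fintype.card_equiv (Fintype.equivFinOfCardEq hn), hn]
    _ = G.degree w * n ! := by rw [sum_const, G.card_neighborFinset_eq_degree, smul_eq_mul]

theorem sum_card_isGapAfter_le_three_mul (hn : Fintype.card V = n) {w : V} {D L : ℕ}
    (hD : 0 < D) (hDw : D ≤ G.degree w) (hLn : L ≤ n - 1)
    (hL : ((n : ℝ) - 1) * min (Real.log n / D) 1 ≤ L) :
    ∑ u ∈ G.neighborFinset w, #{π : V ≃ Fin n | IsGapAfter π (G.neighborFinset w) L u} ≤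
      3 * n ! := by
  calc _ ≤ ∑ _u ∈ G.neighborFinset w,
          (n - G.degree w)! * (n * (n - 1 - L).descFactorial (G.degree w - 1)) :=
        sum_le_sum fun u hu => by
          simpa [hn, G.card_neighborFinset_eq_degree] using card_isGapAfter_le _ hu L
    _ = G.degree w * ((n - G.degree w)! * (n * (n - 1 - L).descFactorial (G.degree w - 1))) := by
        rw [sum_const, G.card_neighborFinset_eq_degree, smul_eq_mul]
    _ ≤ 3 * n ! := by
        exact_mod_cast natCast_mul_factorial_mul_descFactorial_le hD hDw
          (hn ▸ G.degree_lt_card_verts w) hLn hL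

theorem sum_ncard_Ppairs_le (hn : Fintype.card V = n) (Hi : Finset V) {D L : ℕ} (hD : 0 < D)
    (hHi : ∀ w ∈ Hi, D ≤ G.degree w) (hLn : L ≤ n - 1)
    (hL : ((n : ℝ) - 1) * min (Real.log n / D) 1 ≤ L) :
    ∑ π : V ≃ Fin n, (Ppairs G π).ncard ≤
      n ! * (2 * ∑ w ∈ Hiᶜ, G.degree w + #Hi * (L + 3)) := by
  have hgaps : ∑ π : V ≃ Fin n, gapCount G π L ≤ n ! * (∑ w ∈ Hiᶜ, G.degree w + 3 * #Hi) := by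
    rw [sum_gapCount_eq, ← sum_add_sum_compl Hi]
    calc _ ≤ ∑ _w ∈ Hi, 3 * n ! + ∑ w ∈ Hiᶜ, G.degree w * n ! :=
          add_le_add
            (sum_le_sum fun w hw => sum_card_isGapAfter_le_three_mul G hn hD (hHi w hw) hLn hL)
            (sum_le_sum fun w _ => sum_card_isGapAfter_le_degree_mul G hn w L)
      _ = n ! * (∑ w ∈ Hiᶜ, G.degree w + 3 * #Hi) := by rw [sum_const, ← sum_mul]; ring
  calc ∑ π : V ≃ Fin n, (Ppairs G π).ncard
      ≤ ∑ π : V ≃ Fin n, (∑ u, min (G.degree u) L + gapCount G π L) :=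
        sum_le_sum fun π _ => ncard_Ppairs_le G π L
    _ = n ! * ∑ u, min (G.degree u) L + ∑ π : V ≃ Fin n, gapCount G π L := by
        rw [sum_add_distrib, sum_const, card_univ, Fintype.card_equiv (Fintype.equivFinOfCardEq hn),
          hn, smul_eq_mul]
    _ ≤ n ! * (∑ w ∈ Hiᶜ, G.degree w + #Hi * L) + n ! * (∑ w ∈ Hiᶜ, G.degree w + 3 * #Hi) :=
        add_le_add (Nat.mul_le_mul_left _ (sum_min_degree_le G Hi L)) hgaps
    _ = n ! * (2 * ∑ w ∈ Hiᶜ, G.degree w + #Hi * (L + 3)) := by ring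

end Expectation

theorem Nat.ceil_sub_one_mul_min_one_le {n : ℕ} (hn : 0 < n) (y : ℝ) :
    ⌈((n : ℝ) - 1) * min y 1⌉₊ ≤ n - 1 := by
  refine Nat.ceil_le.mpr ?_
  rw [Nat.cast_sub hn, Nat.cast_one]
  exact mul_le_of_le_one_right (sub_nonneg.mpr (Nat.one_le_cast.mpr hn)) (min_le_right _ _)

theorem natCast_mul_ceil_add_three_le {n m : ℕ} {y : ℝ} (hy : 0 ≤ y) (hm : 1 ≤ m) (hmn : m ≤ n) :
    (m : ℝ) * (⌈((n : ℝ) - 1) * min y 1⌉₊ + 3) ≤ 4 * n + (m - 1) * n * y := by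
  have hm' : (1 : ℝ) ≤ m := by exact_mod_cast hm
  have hmn' : (m : ℝ) ≤ n := by exact_mod_cast hmn
  have hy' : 0 ≤ min y 1 := le_min hy zero_le_one
  have hceil : (⌈((n : ℝ) - 1) * min y 1⌉₊ : ℝ) ≤ (n - 1) * min y 1 + 1 :=
    (Nat.ceil_lt_add_one (mul_nonneg (by linarith) hy')).le
  nlinarith [mul_le_mul_of_nonneg_left (min_le_left y 1) (by positivity : (0 : ℝ) ≤ (m - 1) * n),
    mul_le_mul_of_nonneg_left (min_le_right y 1) (by linarith : (0 : ℝ) ≤ n - m)]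

section Reindex

variable {V : Type*} [Fintype V] {n : ℕ} (e : Fin n ≃ V) (t : Fin n)

theorem card_filter_le_symm_apply : #{v | t ≤ e.symm v} = n - t := by
  rw [show ({v | t ≤ e.symm v} : Finset V) = (Ici t).map e.toEmbedding by ext v; simp,
    card_map, Fin.card_Ici]

theorem sum_compl_filter_le_symm_apply [DecidableEq V] (f : V → ℕ) :
    ∑ v ∈ ({v | t ≤ e.symm v} : Finset V)ᶜ, f v = ∑ i ∈ univ.filter (· < t), f (e i) := by
  rw [compl_filter, sum_filter, ← e.sum_comp, sum_filter]
  simp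

end Reindex

theorem stmt10_general {V : Type*} [Fintype V] [DecidableEq V] (G : SimpleGraph V)
    (n : ℕ) (hn : n = Fintype.card V)
    (d : Fin n → ℕ) (hmono : Monotone d) (e : Fin n ≃ V)
    (hd : ∀ i : Fin n, d i = Nat.card (G.neighborSet (e i)))
    (t : Fin n) (hdt : 1 ≤ d t) :
    (∑ π : V ≃ Fin n, ((Ppairs G π).ncard : ℝ)) / (Nat.factorial n) ≤
      4 * n + 2 * (∑ i ∈ Finset.univ.filter (fun i : Fin n => i < t), (d i : ℝ)) +
        ((n : ℝ) - (t.val + 1)) * n * Real.log n / d t := by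
  classical
  have hdeg : ∀ v, G.degree v = d (e.symm v) := fun v => by
    rw [hd, e.apply_symm_apply, Nat.card_eq_fintype_card, G.card_neighborSet_eq_degree]
  have key := sum_ncard_Ppairs_le G hn.symm {v | t ≤ e.symm v} hdt
    (fun w hw => hdeg w ▸ hmono (mem_filter.mp hw).2)
    (Nat.ceil_sub_one_mul_min_one_le t.pos (Real.log n / d t)) (Nat.le_ceil _)
  simp only [card_filter_le_symm_apply, sum_compl_filter_le_symm_apply, hdeg,
    e.symm_apply_apply] at key
  have harith := natCast_mul_ceil_add_three_le (div_nonneg (Real.log_natCast_nonneg n)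
    (Nat.cast_nonneg (d t))) (Nat.sub_pos_of_lt t.isLt) (Nat.sub_le n t)
  rw [Nat.cast_sub t.isLt.le, sub_sub, ← mul_div_assoc] at harith
  rw [div_le_iff₀ (by positivity), mul_comm]
  calc ∑ π : V ≃ Fin n, ((Ppairs G π).ncard : ℝ)
      ≤ n ! * (2 * ∑ i ∈ univ.filter (· < t), (d i : ℝ) +
          ((n - t : ℕ) : ℝ) * (⌈((n : ℝ) - 1) * min (Real.log n / d t) 1⌉₊ + 3)) := by
        exact_mod_cast key
    _ ≤ _ := by
        rw [Nat.cast_sub t.isLt.le]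
        refine mul_le_mul_of_nonneg_left ?_ (by positivity)
        linarith

/-- Let `G` be a graph on `n ≥ 2` vertices with degree sequence `d₁ ≤ … ≤ d_n`
(realized via a bijection `e`). For every index `t` (`0`-indexed here, so `d t` is the
`(t+1)`-st smallest degree) with `d t ≥ 1`, the average of `|P(π)|` over all `n!`
orderings `π` of the vertices is at most
`4n + 2·(d₁ + … + d_{t}) + (n − (t+1)) · n · ln n / d_{t+1}` (paper indexing). -/
theorem stmt10 {V : Type*} [Fintype V] [DecidableEq V] (G : SimpleGraph V)
    (n : ℕ) (hn : n = Fintype.card V) (h2 : 2 ≤ n)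
    (d : Fin n → ℕ) (hmono : Monotone d) (e : Fin n ≃ V)
    (hd : ∀ i : Fin n, d i = Nat.card (G.neighborSet (e i)))
    (t : Fin n) (hdt : 1 ≤ d t) :
    (∑ π : V ≃ Fin n, ((Ppairs G π).ncard : ℝ)) / (Nat.factorial n) ≤
      4 * n + 2 * (∑ i ∈ Finset.univ.filter (fun i : Fin n => i < t), (d i : ℝ)) +
        ((n : ℝ) - (t.val + 1)) * n * Real.log n / d t :=
  stmt10_general G n hn d hmono e hd t hdt
end

section
/- Let G be a biconnected finite simple graph with n vertices and m edges (G is connected and G − v is connected for every vertex v), and suppose G admits a perfect cancellation ordering. Then G admits a graphic parity network of size m + n − 1. -/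
/-- Apply a CNOT gate `g = (control, target)` to a state `t : V → Finset V`:
the target wire receives the symmetric difference of the control and target terms,
all other wires are unchanged. -/
def applyGate {V : Type*} [DecidableEq V] (g : V × V) (t : V → Finset V) : V → Finset V :=
  fun w => if w = g.2 then symmDiff (t g.1) (t g.2) else t w

/-- Run a circuit (a list of CNOT gates) from the initial state `term v = {v}`. -/
def runCircuit {V : Type*} [DecidableEq V] (C : List (V × V)) : V → Finset V :=
  C.foldl (fun t g => applyGate g t) (fun v => {v})

/-- `C` is a graphic parity network for the graph `G`:
every gate has distinct control and target, every edge `{u, v}` of `G` appears as the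
term of some wire after some prefix of the circuit, and the final state is the initial
state. Its size is `C.length`. -/
def IsGPN {V : Type*} [DecidableEq V] (G : SimpleGraph V) (C : List (V × V)) : Prop :=
  (∀ g ∈ C, g.1 ≠ g.2) ∧
  (∀ u v : V, G.Adj u v → ∃ (k : ℕ) (w : V), runCircuit (C.take k) w = {u, v}) ∧
  (∀ v : V, runCircuit C v = {v})

/-- A set `U` is `σ`-linked if any two vertices of `U` that are consecutive in the
restriction of the ordering `σ` to `U` are adjacent in `G`. -/
def SigmaLinked {V : Type*} (G : SimpleGraph V) {n : ℕ} (σ : V ≃ Fin n) (U : Set V) :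
    Prop :=
  ∀ ⦃a b : V⦄, a ∈ U → b ∈ U → σ a < σ b →
    (∀ w ∈ U, ¬(σ a < σ w ∧ σ w < σ b)) → G.Adj a b

/-- The set of neighbors of `v` occurring after `v` in the ordering `σ`. -/
def NPlus {V : Type*} (G : SimpleGraph V) {n : ℕ} (σ : V ≃ Fin n) (v : V) : Set V :=
  {u | G.Adj v u ∧ σ v < σ u}

/-- `σ` is a perfect cancellation ordering of `G`: for every vertex `v` and every
connected component `K` of `G − v`, the set `N⁺_σ(v) ∩ K` is `σ`-linked. -/
def IsPCO {V : Type*} [Fintype V] (G : SimpleGraph V)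
    (σ : V ≃ Fin (Fintype.card V)) : Prop :=
  ∀ (v : V) (K : (G.induce {u : V | u ≠ v}).ConnectedComponent),
    SigmaLinked G σ (NPlus G σ v ∩ (Subtype.val '' K.supp))

/-- A perfect cancellation graph is a graph admitting a perfect cancellation ordering. -/
def PerfectCancellationGraph {V : Type*} [Fintype V] (G : SimpleGraph V) : Prop :=
  ∃ σ : V ≃ Fin (Fintype.card V), IsPCO G σ

/-!
Order the vertices by `σ`. The circuit first sweeps over the arcs `(a, b)` with `σ a < σ b`, by
increasing `b` and, for equal `b`, decreasing `a`; throughout, wire `x` holds `{x, u}` with `u` the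
last processed later neighbour of `x`. Each arc costs one gate: if `u` precedes `b` in `N⁺(a)`,
then `u` and `b` are consecutive in `N⁺(a)`, which lies in a single component of `G − a` and is
therefore `σ`-linked, so `(u, b)` is an edge that has already been processed and wire `u` holds
`{u, b}`; adding it to wire `a` turns `{a, u}` into `{a, b}`. After the sweep, wire `x` holds
`{x, max N⁺(x)}`, and these wires are cleaned in decreasing `σ`-order with one gate each.
Deleting the vertices one by one in `σ`-order keeps the graph connected (again by linkedness),
so every vertex but the last has a later neighbour: the cleanup costs exactly `n - 1` gates.
-/

open Finset

section Circuits

variable {V : Type*} [DecidableEq V]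

def execute (C : List (V × V)) (t : V → Finset V) : V → Finset V :=
  C.foldl (fun t g => applyGate g t) t

lemma runCircuit_eq_execute (C : List (V × V)) :
    runCircuit C = execute C fun v => {v} := rfl

@[simp]
lemma execute_nil (t : V → Finset V) : execute [] t = t := rfl

@[simp]
lemma execute_cons (g : V × V) (C : List (V × V)) (t : V → Finset V) :
    execute (g :: C) t = execute C (applyGate g t) := rfl

lemma execute_append (C D : List (V × V)) (t : V → Finset V) :
    execute (C ++ D) t = execute D (execute C t) :=
  List.foldl_append

lemma pair_symmDiff_pair {a b c : V} (hab : a ≠ b) (hac : a ≠ c) (hbc : b ≠ c) :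
    symmDiff ({c, b} : Finset V) {a, c} = {a, b} := by
  ext z
  simp only [mem_symmDiff, mem_insert, mem_singleton]
  grind

/-- `hpw` makes sure that the wire `m x` is already clean when `x` is processed. -/
theorem execute_cleanup (m : V → V) (L : List V) (hL : ∀ y, y ∈ L ↔ m y ≠ y)
    (hnd : L.Nodup) (hpw : L.Pairwise fun x y => m x ≠ y) :
    execute (L.map fun x => (m x, x)) (fun y => {y, m y}) = fun y => {y} := by
  induction L generalizing m with
  | nil =>
    funext y
    simp [not_not.mp (mt (hL y).mpr List.not_mem_nil)]
  | cons x L ih =>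
    rw [List.nodup_cons] at hnd
    rw [List.pairwise_cons] at hpw
    have hmx : m x ≠ x := (hL x).mp List.mem_cons_self
    have hmm : m (m x) = m x := by
      by_contra h
      rcases List.mem_cons.mp ((hL _).mpr h) with h' | h'
      · exact hmx h'
      · exact hpw.1 _ h' rfl
    have hstep : applyGate (m x, x) (fun y => {y, m y}) =
        fun y => {y, Function.update m x x y} := by
      funext y
      by_cases hy : y = x
      · subst hy
        simp only [applyGate, if_true, hmm, Function.update_self]
        ext z
        simp only [mem_symmDiff, mem_insert, mem_singleton]
        grind
      · simp [applyGate, hy]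
    have hgates : L.map (fun z => (m z, z)) = L.map fun z => (Function.update m x x z, z) :=
      List.map_congr_left fun z hz => by rw [Function.update_of_ne (ne_of_mem_of_not_mem hz hnd.1)]
    rw [List.map_cons, execute_cons, hstep, hgates]
    refine ih _ (fun y => ?_) hnd.2 (hpw.2.imp_of_mem fun hz _ h => ?_)
    · by_cases hy : y = x
      · subst hy
        simp [hnd.1]
      · simp [← hL y, hy]
    · rwa [Function.update_of_ne (ne_of_mem_of_not_mem hz hnd.1)]

end Circuits

section Ordering

variable {V : Type*} {n : ℕ} (σ : V ≃ Fin n)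

def lastOr (s : Finset V) (d : V) : V :=
  if h : s.Nonempty then σ.symm (s.sup' h σ) else d

variable {σ}

@[simp]
lemma lastOr_empty (d : V) : lastOr σ ∅ d = d := rfl

lemma lastOr_eq {s : Finset V} {u : V} (hu : u ∈ s) (hmax : ∀ w ∈ s, σ w ≤ σ u) (d : V) :
    lastOr σ s d = u := by
  rw [lastOr, dif_pos ⟨u, hu⟩, σ.symm_apply_eq]
  exact le_antisymm (sup'_le _ _ hmax) (le_sup' _ hu)

lemma lastOr_mem_or_eq (s : Finset V) (d : V) : lastOr σ s d ∈ s ∨ lastOr σ s d = d := by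
  by_cases h : s.Nonempty
  · obtain ⟨u, hu, hsup⟩ := exists_mem_eq_sup' h σ
    left
    rwa [lastOr, dif_pos h, hsup, σ.symm_apply_apply]
  · exact Or.inr (dif_neg h)

variable (σ) in
/-- The arcs `(a, b)` with `σ a < σ b` are processed in the lexicographic order of
`(σ b, -σ a)`. -/
def arcKey (a b : V) : ℕ := n * σ b + (n - 1 - σ a)

lemma arcKey_lt_arcKey_of_snd_lt {a a' b b' : V} (h : σ b < σ b') :
    arcKey σ a b < arcKey σ a' b' := by
  have hb : n * (σ b + 1 : ℕ) ≤ n * σ b' := Nat.mul_le_mul_left n (Fin.lt_def.mp h)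
  have := (σ a).isLt
  unfold arcKey
  rw [Nat.mul_succ] at hb
  omega

lemma arcKey_lt_arcKey_of_fst_lt {a a' b : V} (h : σ a < σ a') :
    arcKey σ a' b < arcKey σ a b := by
  have := (σ a').isLt
  have := Fin.lt_def.mp h
  unfold arcKey
  omega

lemma arcKey_lt_arcKey_iff {a u b : V} : arcKey σ a u < arcKey σ a b ↔ σ u < σ b := by
  refine ⟨fun h => ?_, arcKey_lt_arcKey_of_snd_lt⟩
  by_contra! hle
  rcases hle.lt_or_eq with hlt | heq
  · exact (arcKey_lt_arcKey_of_snd_lt (a := a) hlt).asymm h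
  · rw [σ.injective heq] at h
    exact h.false

lemma arcKey_inj {a a' b b' : V} (h : arcKey σ a b = arcKey σ a' b') : a = a' ∧ b = b' := by
  have hb : b = b' := by
    by_contra hne
    rcases lt_or_gt_of_ne (σ.injective.ne hne) with hlt | hlt
    · exact (arcKey_lt_arcKey_of_snd_lt hlt).ne h
    · exact (arcKey_lt_arcKey_of_snd_lt hlt).ne' h
  subst hb
  refine ⟨σ.injective (Fin.ext ?_), rfl⟩
  have := (σ a).isLt
  have := (σ a').isLt
  unfold arcKey at h
  omega

lemma arcKey_lt_mul_self (a b : V) : arcKey σ a b < n * n := by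
  have hb : n * (σ b + 1 : ℕ) ≤ n * n := Nat.mul_le_mul_left n (σ b).isLt
  have := (σ a).isLt
  unfold arcKey
  rw [Nat.mul_succ] at hb
  omega

end Ordering

section Sweep

variable {V : Type*} [Fintype V] (G : SimpleGraph V) [DecidableRel G.Adj]
  {n : ℕ} (σ : V ≃ Fin n)

def upNbrs (v : V) : Finset V := {u | G.Adj v u ∧ σ v < σ u}

def arcs : Finset (V × V) := {p | G.Adj p.1 p.2 ∧ σ p.1 < σ p.2}

def doneNbrs (N : ℕ) (x : V) : Finset V := {u ∈ upNbrs G σ x | arcKey σ x u < N}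

open Classical in
noncomputable def arcAt (N : ℕ) : Option (V × V) :=
  if h : ∃ p ∈ arcs G σ, arcKey σ p.1 p.2 = N then some h.choose else none

def arcGate (p : V × V) : V × V :=
  (lastOr σ (doneNbrs G σ (arcKey σ p.1 p.2) p.1) p.2, p.1)

noncomputable def edgeGates (N : ℕ) : List (V × V) :=
  ((List.range N).filterMap (arcAt G σ)).map (arcGate G σ)

variable {G σ}

@[simp]
lemma mem_upNbrs {v u : V} : u ∈ upNbrs G σ v ↔ G.Adj v u ∧ σ v < σ u := by
  simp [upNbrs]

@[simp]
lemma mem_arcs {p : V × V} : p ∈ arcs G σ ↔ G.Adj p.1 p.2 ∧ σ p.1 < σ p.2 := by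
  simp [arcs]

@[simp]
lemma mem_doneNbrs {N : ℕ} {x u : V} :
    u ∈ doneNbrs G σ N x ↔ (G.Adj x u ∧ σ x < σ u) ∧ arcKey σ x u < N := by
  simp [doneNbrs]

lemma arcAt_eq_some_iff {N : ℕ} {p : V × V} :
    arcAt G σ N = some p ↔ p ∈ arcs G σ ∧ arcKey σ p.1 p.2 = N := by
  unfold arcAt
  split_ifs with h
  · refine ⟨fun hp => Option.some_injective _ hp ▸ h.choose_spec, fun hp => ?_⟩
    obtain ⟨ha, hb⟩ := arcKey_inj (h.choose_spec.2.trans hp.2.symm)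
    exact congrArg some (Prod.ext ha hb)
  · exact ⟨nofun, fun hp => h ⟨p, hp⟩⟩

lemma card_arcs : #(arcs G σ) = Nat.card G.edgeSet := by
  classical
  rw [Nat.card_eq_fintype_card, ← SimpleGraph.edgeFinset_card]
  refine card_nbij (fun p => s(p.1, p.2)) (fun p hp => ?_) (fun p hp q hq hpq => ?_) fun e he => ?_
  · simpa using (mem_arcs.mp hp).1
  · rw [mem_coe, mem_arcs] at hp hq
    rcases Sym2.eq_iff.mp hpq with ⟨h1, h2⟩ | ⟨h1, h2⟩
    · exact Prod.ext h1 h2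
    · rw [h1, h2] at hp
      exact absurd hp.2 hq.2.asymm
  · induction e with
    | _ x y =>
      have hxy : G.Adj x y := by simpa using he
      rcases lt_or_gt_of_ne (σ.injective.ne hxy.ne) with h | h
      · exact ⟨(x, y), by simpa using ⟨hxy, h⟩, rfl⟩
      · exact ⟨(y, x), by simpa using ⟨hxy.symm, h⟩, Sym2.eq_swap⟩

lemma doneNbrs_succ_of_forall_ne {N : ℕ} {x : V}
    (h : ∀ u ∈ upNbrs G σ x, arcKey σ x u ≠ N) :
    doneNbrs G σ (N + 1) x = doneNbrs G σ N x := by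
  ext u
  simp only [mem_doneNbrs]
  exact and_congr_right fun hu => by have := h u (mem_upNbrs.mpr hu); omega

lemma doneNbrs_of_mul_self_le {N : ℕ} (hN : n * n ≤ N) (x : V) :
    doneNbrs G σ N x = upNbrs G σ x := by
  ext u
  simpa using fun _ _ => (arcKey_lt_mul_self x u).trans_le hN

lemma doneNbrs_arcKey_snd (a b : V) : doneNbrs G σ (arcKey σ a b) b = ∅ := by
  ext u
  simpa using fun _ hbu => (arcKey_lt_arcKey_of_snd_lt hbu).le

lemma length_edgeGates : (edgeGates G σ (n * n)).length = #(arcs G σ) := by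
  classical
  have hnd : ((List.range (n * n)).filterMap (arcAt G σ)).Nodup :=
    List.nodup_range.filterMap fun N N' p hN hN' =>
      (arcAt_eq_some_iff.mp hN).2.symm.trans (arcAt_eq_some_iff.mp hN').2
  rw [edgeGates, List.length_map, ← List.toFinset_card_of_nodup hnd]
  congr 1
  ext p
  simp only [List.mem_toFinset, List.mem_filterMap, List.mem_range, arcAt_eq_some_iff]
  exact ⟨fun ⟨_, _, hp, _⟩ => hp, fun hp => ⟨_, arcKey_lt_mul_self p.1 p.2, hp, rfl⟩⟩

lemma edgeGates_prefix {N M : ℕ} (h : N ≤ M) : edgeGates G σ N <+: edgeGates G σ M := by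
  obtain ⟨k, rfl⟩ := Nat.exists_eq_add_of_le h
  rw [edgeGates, edgeGates, List.range_add, List.filterMap_append, List.map_append]
  exact List.prefix_append _ _

lemma arcGate_fst_ne_snd {p : V × V} (hp : p ∈ arcs G σ) :
    (arcGate G σ p).1 ≠ (arcGate G σ p).2 := by
  rw [mem_arcs] at hp
  rcases lastOr_mem_or_eq (doneNbrs G σ (arcKey σ p.1 p.2) p.1) p.2 with h | h
  · exact (G.ne_of_adj (mem_doneNbrs.mp h).1.1).symm
  · simpa [arcGate, h] using (G.ne_of_adj hp.1).symm

end Sweep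

section SweepInvariant

variable {V : Type*} [Fintype V] [DecidableEq V] {G : SimpleGraph V} [DecidableRel G.Adj]
  {n : ℕ} {σ : V ≃ Fin n}

variable (G σ) in
/-- This is `{x}` as long as no later neighbour of `x` has been processed. -/
def sweepState (N : ℕ) (x : V) : Finset V := {x, lastOr σ (doneNbrs G σ N x) x}

lemma sweepState_arcKey_succ {a b : V} (hab : (a, b) ∈ arcs G σ) :
    sweepState G σ (arcKey σ a b + 1) a = {a, b} := by
  rw [mem_arcs] at hab
  refine congrArg (insert a {·}) (lastOr_eq (by simpa using hab) (fun w hw => ?_) a)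
  rw [mem_doneNbrs, Nat.lt_succ_iff, ← not_lt, arcKey_lt_arcKey_iff] at hw
  exact not_lt.mp hw.2

lemma sweepState_of_isLast (hlink : ∀ v, SigmaLinked G σ (NPlus G σ v)) {a b u : V}
    (hab : (a, b) ∈ arcs G σ) (hu : u ∈ doneNbrs G σ (arcKey σ a b) a)
    (hmax : ∀ w ∈ doneNbrs G σ (arcKey σ a b) a, σ w ≤ σ u) :
    sweepState G σ (arcKey σ a b) u = {u, b} := by
  rw [mem_arcs] at hab
  rw [mem_doneNbrs, arcKey_lt_arcKey_iff] at hu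
  have hub : G.Adj u b := by
    refine hlink a hu.1 hab hu.2 fun w hw hbetween => ?_
    have := hmax w (mem_doneNbrs.mpr ⟨hw, arcKey_lt_arcKey_iff.mpr hbetween.2⟩)
    exact (this.trans_lt hbetween.1).false
  refine congrArg (insert u {·}) (lastOr_eq ?_ (fun w hw => ?_) u)
  · exact mem_doneNbrs.mpr ⟨⟨hub, hu.2⟩, arcKey_lt_arcKey_of_fst_lt hu.1.2⟩
  · by_contra! hbw
    exact (mem_doneNbrs.mp hw).2.asymm (arcKey_lt_arcKey_of_snd_lt hbw)

lemma applyGate_arcGate (hlink : ∀ v, SigmaLinked G σ (NPlus G σ v)) {a b : V}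
    (hab : (a, b) ∈ arcs G σ) :
    applyGate (arcGate G σ (a, b)) (sweepState G σ (arcKey σ a b)) =
      sweepState G σ (arcKey σ a b + 1) := by
  funext x
  by_cases hx : x = a
  · subst hx
    have hxb : x ≠ b := G.ne_of_adj (mem_arcs.mp hab).1
    rw [sweepState_arcKey_succ hab]
    simp only [applyGate, arcGate, if_true]
    by_cases hdone : (doneNbrs G σ (arcKey σ x b) x).Nonempty
    · obtain ⟨u, hu, hmax⟩ := exists_max_image _ σ hdone
      have hxu : x ≠ u := G.ne_of_adj (mem_doneNbrs.mp hu).1.1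
      have hub : b ≠ u := fun h => by
        simp [h] at hu
      rw [lastOr_eq hu hmax, sweepState_of_isLast hlink hab hu hmax, sweepState,
        lastOr_eq hu hmax]
      exact pair_symmDiff_pair hxb hxu hub
    · -- the control is `b`, whose wire is still clean
      rw [not_nonempty_iff_eq_empty] at hdone
      simp only [sweepState, hdone, doneNbrs_arcKey_snd, lastOr_empty, insert_eq_of_mem,
        mem_singleton]
      ext z
      simp only [mem_symmDiff, mem_insert, mem_singleton]
      grind
  · have hkey : ∀ u ∈ upNbrs G σ x, arcKey σ x u ≠ arcKey σ a b :=
      fun u _ h => hx (arcKey_inj h).1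
    simp [applyGate, arcGate, hx, sweepState, doneNbrs_succ_of_forall_ne hkey]

theorem execute_edgeGates (hlink : ∀ v, SigmaLinked G σ (NPlus G σ v)) (N : ℕ) :
    execute (edgeGates G σ N) (fun v => {v}) = sweepState G σ N := by
  induction N with
  | zero =>
    funext x
    simp [edgeGates, sweepState, doneNbrs]
  | succ N ih =>
    rw [edgeGates, List.range_succ, List.filterMap_append, List.map_append, execute_append,
      ← edgeGates, ih]
    cases h : arcAt G σ N with
    | none =>
      funext x
      have hkey : ∀ u ∈ upNbrs G σ x, arcKey σ x u ≠ N :=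
        fun u hu hN => by
          have : arcAt G σ N = some (x, u) :=
            arcAt_eq_some_iff.mpr ⟨mem_arcs.mpr (mem_upNbrs.mp hu), hN⟩
          exact Option.some_ne_none _ (this.symm.trans h)
      simp [h, sweepState, doneNbrs_succ_of_forall_ne hkey]
    | some p =>
      obtain ⟨hp, rfl⟩ := arcAt_eq_some_iff.mp h
      simp [h, applyGate_arcGate hlink hp]

end SweepInvariant

section UpperConnectivity

variable {V : Type*} {G : SimpleGraph V}

/-- A walk through `v` is rerouted between the two neighbours of `v` on it. -/
theorem SimpleGraph.Preconnected.induce_diff_singleton {S T : Set V} {v : V}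
    (hS : (G.induce S).Preconnected) (hT : ∀ z, z ∈ T ↔ z ∈ S ∧ z ≠ v)
    (hnbr : ∀ a b (ha : a ∈ T) (hb : b ∈ T), G.Adj v a → G.Adj v b →
      (G.induce T).Reachable ⟨a, ha⟩ ⟨b, hb⟩) :
    (G.induce T).Preconnected := by
  have reroute : ∀ {p q : S} (w : (G.induce S).Walk p q) (hq : (q : V) ∈ T) (a : V)
      (ha : a ∈ T), a = p ∨ (p : V) = v ∧ G.Adj v a →
      (G.induce T).Reachable ⟨a, ha⟩ ⟨q, hq⟩ := by
    intro p q w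
    induction w with
    | nil =>
      rintro hq a ha (rfl | ⟨rfl, -⟩)
      · rfl
      · exact absurd rfl ((hT _).mp hq).2
    | @cons p u q hpu w ih =>
      have hpu : G.Adj p u := hpu
      rintro hq a ha (rfl | ⟨hp, hva⟩)
      · by_cases hu : (u : V) = v
        · exact ih hq p ha (Or.inr ⟨hu, hu ▸ hpu.symm⟩)
        · have huT : (u : V) ∈ T := (hT _).mpr ⟨u.2, hu⟩
          have hau : (G.induce T).Adj ⟨p, ha⟩ ⟨u, huT⟩ := hpu
          exact hau.reachable.trans (ih hq u huT (Or.inl rfl))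
      · have huT : (u : V) ∈ T := (hT _).mpr ⟨u.2, (hp ▸ G.ne_of_adj hpu).symm⟩
        exact (hnbr a u ha huT hva (hp ▸ hpu)).trans (ih hq u huT (Or.inl rfl))
  rintro ⟨x, hx⟩ ⟨y, hy⟩
  obtain ⟨w⟩ := hS ⟨x, ((hT x).mp hx).1⟩ ⟨y, ((hT y).mp hy).1⟩
  exact reroute w hy x hx (Or.inl rfl)

variable {n : ℕ} {σ : V ≃ Fin n}

theorem SigmaLinked.reachable_induce {U T : Set V} (hU : SigmaLinked G σ U) (hUT : U ⊆ T)
    {a b : V} (ha : a ∈ U) (hb : b ∈ U) :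
    (G.induce T).Reachable ⟨a, hUT ha⟩ ⟨b, hUT hb⟩ := by
  wlog hab : σ a ≤ σ b generalizing a b
  · exact (this hb ha (le_of_not_ge hab)).symm
  induction hd : (σ b : ℕ) - σ a using Nat.strong_induction_on generalizing a b with
  | _ d ih =>
  rcases hab.eq_or_lt with h | h
  · cases σ.injective h
    rfl
  by_cases hbetween : ∃ w ∈ U, σ a < σ w ∧ σ w < σ b
  · obtain ⟨w, hw, haw, hwb⟩ := hbetween
    have := Fin.lt_def.mp haw
    have := Fin.lt_def.mp hwb
    exact (ih _ (by omega) ha hw haw.le rfl).trans (ih _ (by omega) hw hb hwb.le rfl)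
  · push Not at hbetween
    have hab' : (G.induce T).Adj ⟨a, hUT ha⟩ ⟨b, hUT hb⟩ :=
      hU ha hb h fun w hw hbw => (hbetween w hw hbw.1).not_gt hbw.2
    exact hab'.reachable

/-- Vertices are removed in σ-order; `v` can go since `N⁺(v)` is σ-linked. -/
theorem preconnected_induce_le (hconn : G.Preconnected)
    (hlink : ∀ v, SigmaLinked G σ (NPlus G σ v)) (k : ℕ) :
    (G.induce {z | k ≤ (σ z : ℕ)}).Preconnected := by
  induction k with
  | zero =>
    intro x y
    obtain ⟨w⟩ := hconn x y
    exact (w.induce _ fun z _ => Nat.zero_le _).reachable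
  | succ k ih =>
    by_cases hk : k < n
    · set v := σ.symm ⟨k, hk⟩
      have hσv : (σ v : ℕ) = k := by simp [v]
      have hσ : ∀ z, z ≠ v ↔ (σ z : ℕ) ≠ k := fun z => by
        rw [← hσv, Ne, Ne, Fin.val_inj, σ.injective.eq_iff]
      refine ih.induce_diff_singleton (v := v) (fun z => ?_) fun a b ha hb hva hvb => ?_
      · simp only [Set.mem_ofPred_eq, hσ]
        omega
      · have hNPlus : ∀ z ∈ NPlus G σ v, z ∈ {z | k + 1 ≤ (σ z : ℕ)} := fun z hz => by
          have := Fin.lt_def.mp hz.2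
          simp only [Set.mem_ofPred_eq]
          omega
        have hlt : ∀ z : V, k + 1 ≤ (σ z : ℕ) → σ v < σ z := fun z hz => by
          rw [Fin.lt_def]
          omega
        exact (hlink v).reachable_induce hNPlus ⟨hva, hlt a ha⟩ ⟨hvb, hlt b hb⟩
    · rintro ⟨x, hx⟩
      exact absurd (σ x).isLt (by simp only [Set.mem_ofPred_eq] at hx; omega)

theorem upNbrs_nonempty [Fintype V] [DecidableRel G.Adj] (hconn : G.Preconnected)
    (hlink : ∀ v, SigmaLinked G σ (NPlus G σ v)) {x y : V} (hxy : σ x < σ y) :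
    (upNbrs G σ x).Nonempty := by
  obtain ⟨p⟩ := preconnected_induce_le hconn hlink (σ x)
    ⟨x, le_refl (σ x : ℕ)⟩ ⟨y, Fin.le_def.mp hxy.le⟩
  have hnil : ¬p.Nil := p.not_nil_of_ne fun h => hxy.ne (congrArg (σ ∘ Subtype.val) h)
  have hadj : G.Adj x p.snd := p.adj_snd hnil
  refine ⟨p.snd, mem_upNbrs.mpr ⟨hadj, lt_of_le_of_ne ?_ (σ.injective.ne hadj.ne)⟩⟩
  exact Fin.le_def.mpr p.snd.2

end UpperConnectivity

theorem IsPCO.sigmaLinked_nPlus {V : Type*} [Fintype V] {G : SimpleGraph V}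
    {σ : V ≃ Fin (Fintype.card V)} (hσ : IsPCO G σ)
    (hbi : ∀ v : V, (G.induce {u : V | u ≠ v}).Connected) (v : V) :
    SigmaLinked G σ (NPlus G σ v) := by
  obtain ⟨u⟩ := (hbi v).nonempty
  set K := (G.induce {u : V | u ≠ v}).connectedComponentMk u
  have hK : NPlus G σ v ∩ Subtype.val '' K.supp = NPlus G σ v :=
    Set.inter_eq_left.mpr fun z hz => ⟨⟨z, (G.ne_of_adj hz.1).symm⟩,
      SimpleGraph.ConnectedComponent.eq.mpr ((hbi v).preconnected _ _), rfl⟩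
  have := hσ v K
  rwa [hK] at this

section Cleanup

variable {V : Type*} [Fintype V] (G : SimpleGraph V) [DecidableRel G.Adj]
  {n : ℕ} (σ : V ≃ Fin n)

def lastUpNbr (x : V) : V := lastOr σ (upNbrs G σ x) x

variable {G σ} in
lemma lt_lastUpNbr {x : V} (h : lastUpNbr G σ x ≠ x) : σ x < σ (lastUpNbr G σ x) := by
  rcases lastOr_mem_or_eq (upNbrs G σ x) x with h' | h'
  · exact (mem_upNbrs.mp h').2
  · exact absurd h' h

variable {G σ} in
lemma lastUpNbr_ne_iff {x : V} : lastUpNbr G σ x ≠ x ↔ (upNbrs G σ x).Nonempty := by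
  refine ⟨fun h => ⟨_, mem_upNbrs.mpr ⟨?_, lt_lastUpNbr h⟩⟩, fun ⟨u, hu⟩ h => ?_⟩
  · rcases lastOr_mem_or_eq (upNbrs G σ x) x with h' | h'
    · exact (mem_upNbrs.mp h').1
    · exact absurd h' h
  · obtain ⟨w, hw, hmax⟩ := exists_max_image _ σ ⟨u, hu⟩
    rw [lastUpNbr, lastOr_eq hw hmax] at h
    exact (mem_upNbrs.mp (h ▸ hw)).2.false

variable [DecidableEq V]

def dirtyWires : List V :=
  ((List.finRange n).reverse.map σ.symm).filter fun x => lastUpNbr G σ x ≠ x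

def cleanupGates : List (V × V) := (dirtyWires G σ).map fun x => (lastUpNbr G σ x, x)

variable {G σ}

lemma mem_dirtyWires {x : V} : x ∈ dirtyWires G σ ↔ lastUpNbr G σ x ≠ x := by
  simpa [dirtyWires] using fun _ => ⟨σ x, σ.symm_apply_apply x⟩

lemma pairwise_dirtyWires : (dirtyWires G σ).Pairwise fun x y => σ y < σ x := by
  refine List.Pairwise.filter _ ?_
  rw [List.pairwise_map, List.pairwise_reverse]
  exact (List.pairwise_lt_finRange n).imp fun h => by simpa using h

lemma nodup_dirtyWires : (dirtyWires G σ).Nodup :=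
  pairwise_dirtyWires.imp fun h hxy => h.ne (congrArg σ hxy.symm)

lemma execute_cleanupGates :
    execute (cleanupGates G σ) (fun x => {x, lastUpNbr G σ x}) = fun x => {x} := by
  refine execute_cleanup _ _ (fun y => mem_dirtyWires) nodup_dirtyWires ?_
  refine pairwise_dirtyWires.imp_of_mem fun hx _ hyx h => ?_
  exact (hyx.trans (lt_lastUpNbr (mem_dirtyWires.mp hx))).ne' (congrArg σ h)

/-- Every vertex but the σ-last one is dirty. -/
lemma length_cleanupGates (hconn : G.Connected) (hlink : ∀ v, SigmaLinked G σ (NPlus G σ v)) :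
    (cleanupGates G σ).length = n - 1 := by
  have hcard : Fintype.card V = n := (Fintype.card_congr σ).trans (Fintype.card_fin n)
  have hn : 0 < n := hcard ▸ Fintype.card_pos_iff.mpr hconn.nonempty
  set top := σ.symm ⟨n - 1, by omega⟩
  have hdirty : (dirtyWires G σ).toFinset = univ.erase top := by
    ext x
    rw [List.mem_toFinset, mem_dirtyWires, lastUpNbr_ne_iff, mem_erase, and_iff_left (mem_univ x)]
    constructor
    · rintro ⟨u, hu⟩ rfl
      have := (σ u).isLt
      have := Fin.lt_def.mp (mem_upNbrs.mp hu).2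
      simp [top] at this
      omega
    · intro hx
      refine upNbrs_nonempty hconn.preconnected hlink (y := top) (Fin.lt_def.mpr ?_)
      have := (σ x).isLt
      have : (σ x : ℕ) ≠ n - 1 := fun h => hx (σ.symm_apply_eq.mpr (Fin.ext h.symm)).symm
      simp [top]
      omega
  rw [cleanupGates, List.length_map, ← List.toFinset_card_of_nodup nodup_dirtyWires, hdirty,
    card_erase_of_mem (mem_univ _), card_univ, hcard]

end Cleanup

section Network

variable {V : Type*} [Fintype V] [DecidableEq V] (G : SimpleGraph V) [DecidableRel G.Adj]
  {n : ℕ} (σ : V ≃ Fin n)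

noncomputable def gpnCircuit : List (V × V) := edgeGates G σ (n * n) ++ cleanupGates G σ

variable {G σ}

lemma exists_take_gpnCircuit_eq_pair (hlink : ∀ v, SigmaLinked G σ (NPlus G σ v)) {a b : V}
    (hab : (a, b) ∈ arcs G σ) : ∃ k, runCircuit ((gpnCircuit G σ).take k) a = {a, b} := by
  have hprefix : edgeGates G σ (arcKey σ a b + 1) <+: gpnCircuit G σ :=
    (edgeGates_prefix (arcKey_lt_mul_self a b)).trans (List.prefix_append _ _)
  refine ⟨(edgeGates G σ (arcKey σ a b + 1)).length, ?_⟩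
  rw [← List.prefix_iff_eq_take.mp hprefix, runCircuit_eq_execute, execute_edgeGates hlink,
    sweepState_arcKey_succ hab]

theorem isGPN_gpnCircuit (hlink : ∀ v, SigmaLinked G σ (NPlus G σ v)) :
    IsGPN G (gpnCircuit G σ) := by
  refine ⟨fun g hg => ?_, fun u v huv => ?_, fun v => ?_⟩
  · rcases List.mem_append.mp hg with hg | hg
    · obtain ⟨p, hp, rfl⟩ := List.mem_map.mp hg
      obtain ⟨N, -, hN⟩ := List.mem_filterMap.mp hp
      exact arcGate_fst_ne_snd (arcAt_eq_some_iff.mp hN).1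
    · obtain ⟨x, hx, rfl⟩ := List.mem_map.mp hg
      exact mem_dirtyWires.mp hx
  · rcases lt_or_gt_of_ne (σ.injective.ne huv.ne) with h | h
    · obtain ⟨k, hk⟩ := exists_take_gpnCircuit_eq_pair hlink (mem_arcs.mpr ⟨huv, h⟩)
      exact ⟨k, u, hk⟩
    · obtain ⟨k, hk⟩ := exists_take_gpnCircuit_eq_pair hlink (mem_arcs.mpr ⟨huv.symm, h⟩)
      exact ⟨k, v, hk.trans (pair_comm v u)⟩
  · have hsweep : sweepState G σ (n * n) = fun x => {x, lastUpNbr G σ x} := by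
      funext x
      rw [sweepState, doneNbrs_of_mul_self_le le_rfl, lastUpNbr]
    rw [runCircuit_eq_execute, gpnCircuit, execute_append, execute_edgeGates hlink, hsweep,
      execute_cleanupGates]

lemma length_gpnCircuit (hconn : G.Connected) (hlink : ∀ v, SigmaLinked G σ (NPlus G σ v)) :
    (gpnCircuit G σ).length = Nat.card G.edgeSet + (n - 1) := by
  rw [gpnCircuit, List.length_append, length_edgeGates, card_arcs, length_cleanupGates hconn hlink]

end Network

/-- A biconnected graph (connected, and still connected after deleting any single
vertex) with `n` vertices and `m` edges admitting a perfect cancellation ordering has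
a graphic parity network of size `m + n − 1`. -/
theorem stmt11 {V : Type*} [Fintype V] [DecidableEq V] (G : SimpleGraph V)
    (hconn : G.Connected) (hbi : ∀ v : V, (G.induce {u : V | u ≠ v}).Connected)
    (σ : V ≃ Fin (Fintype.card V)) (hσ : IsPCO G σ) :
    ∃ C : List (V × V), IsGPN G C ∧
      C.length = Nat.card G.edgeSet + Fintype.card V - 1 := by
  classical
  have hlink := hσ.sigmaLinked_nPlus hbi
  have hn : 0 < Fintype.card V := Fintype.card_pos_iff.mpr hconn.nonempty
  refine ⟨gpnCircuit G σ, isGPN_gpnCircuit hlink, ?_⟩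
  rw [length_gpnCircuit hconn hlink]
  omega
end

section
/- Let G be a finite simple graph and let I be a nonempty set of false twins of G, i.e., all vertices of I have the same neighborhood, and let N(I) denote this common neighborhood. If |N(I)| ≤ |I| − 1, then for every perfect cancellation ordering σ of G, the set N(I) is σ-linked. -/
/-!
Let `a, b` be consecutive in `N(I)`. If some `v ∈ I` precedes `a`, then `a` and `b` lie in
`N⁺(v)`, in one component of `G − v` (joined through a second twin), and `N⁺(v) ⊆ N(I)`; so
they are consecutive in a σ-linked set and hence adjacent. Otherwise all of `I` follows `a` and
lies in the σ-linked set `N⁺(a) ∩ K`, where `K` is the component of `b` in `G − a`. Sending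
each twin but the last one to its successor in that set is an injection into `N(I) \ {a}`,
giving `|I| ≤ |N(I)|`, a contradiction.
-/

theorem SimpleGraph.induce_reachable_of_adj {V : Type*} {G : SimpleGraph V} {s : Set V}
    {x y : V} (hx : x ∈ s) (hy : y ∈ s) (h : G.Adj x y) :
    (G.induce s).Reachable ⟨x, hx⟩ ⟨y, hy⟩ :=
  SimpleGraph.Adj.reachable h

namespace SigmaLinked

variable {V : Type*} [Finite V] {G : SimpleGraph V} {n : ℕ} {σ : V ≃ Fin n} {S : Set V}

theorem exists_adj_next (hS : SigmaLinked G σ S) {v w : V} (hv : v ∈ S) (hw : w ∈ S)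
    (hvw : σ v < σ w) :
    ∃ x ∈ S, σ v < σ x ∧ G.Adj v x ∧ ∀ y ∈ S, σ v < σ y → σ x ≤ σ y := by
  obtain ⟨x, ⟨hxS, hvx⟩, hmin⟩ :=
    Set.exists_min_image {y | y ∈ S ∧ σ v < σ y} σ (Set.toFinite _) ⟨w, hw, hvw⟩
  exact ⟨x, hxS, hvx, hS hv hxS hvx fun y hy ⟨hvy, hyx⟩ => (hmin y ⟨hy, hvy⟩).not_gt hyx,
    fun y hy hvy => hmin y ⟨hy, hvy⟩⟩

theorem ncard_le_ncard_add_one (hS : SigmaLinked G σ S) {I T : Set V} (hIS : I ⊆ S)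
    (hT : ∀ v ∈ I, ∀ w ∈ S, σ v < σ w → G.Adj v w → w ∈ T) :
    I.ncard ≤ T.ncard + 1 := by
  rcases I.eq_empty_or_nonempty with rfl | hI
  · simp
  obtain ⟨m, hmI, hmax⟩ := Set.exists_max_image I σ (Set.toFinite I) hI
  have hnext : ∀ v ∈ I \ {m}, ∃ x ∈ S, σ v < σ x ∧ G.Adj v x ∧
      ∀ y ∈ S, σ v < σ y → σ x ≤ σ y := fun v hv =>
    hS.exists_adj_next (hIS hv.1) (hIS hmI) ((hmax v hv.1).lt_of_ne (σ.injective.ne hv.2))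
  choose! next hnextS hlt hadj hmin using hnext
  have hmaps : Set.MapsTo next (I \ {m}) T := fun v hv =>
    hT v hv.1 _ (hnextS v hv) (hlt v hv) (hadj v hv)
  have hmono : ∀ x ∈ I \ {m}, ∀ y ∈ I \ {m}, σ x < σ y → σ (next x) < σ (next y) :=
    fun x hx y hy hxy => (hmin x hx y (hIS hy.1) hxy).trans_lt (hlt y hy)
  have hinj : Set.InjOn next (I \ {m}) := by
    intro x hx y hy hxy
    by_contra hne
    rcases lt_or_gt_of_ne (σ.injective.ne hne) with h | h
    · exact (hmono x hx y hy h).ne (congrArg σ hxy)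
    · exact (hmono y hy x hx h).ne (congrArg σ hxy.symm)
  calc I.ncard = (I \ {m}).ncard + 1 := (Set.ncard_sdiff_singleton_add_one hmI).symm
    _ ≤ T.ncard + 1 := Nat.add_le_add_right (Set.ncard_le_ncard_of_injOn next hmaps hinj) 1

end SigmaLinked

namespace IsPCO

variable {V : Type*} [Fintype V] {G : SimpleGraph V} {σ : V ≃ Fin (Fintype.card V)}
  {N : Set V} {a b : V}

theorem adj_of_twins (hσ : IsPCO G σ) {u v : V} (huv : u ≠ v) (hu : N ⊆ G.neighborSet u)
    (hv : G.neighborSet v = N) (ha : a ∈ N) (hb : b ∈ N) (hva : σ v < σ a) (hab : σ a < σ b)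
    (hgap : ∀ w ∈ N, ¬(σ a < σ w ∧ σ w < σ b)) : G.Adj a b := by
  have hadj : ∀ w ∈ N, G.Adj v w := fun w hw => by rwa [← hv] at hw
  have hav : a ≠ v := fun h => G.irrefl (h ▸ hadj a ha)
  have hbv : b ≠ v := fun h => G.irrefl (h ▸ hadj b hb)
  have hba : (G.induce {x | x ≠ v}).Reachable ⟨b, hbv⟩ ⟨a, hav⟩ :=
    (SimpleGraph.induce_reachable_of_adj _ huv (hu hb).symm).trans
      (SimpleGraph.induce_reachable_of_adj _ _ (hu ha))
  exact hσ v ((G.induce {x | x ≠ v}).connectedComponentMk ⟨a, hav⟩)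
    ⟨⟨hadj a ha, hva⟩, ⟨_, rfl, rfl⟩⟩
    ⟨⟨hadj b hb, hva.trans hab⟩, ⟨_, SimpleGraph.ConnectedComponent.sound hba, rfl⟩⟩
    hab fun w hw => hgap w (hv ▸ hw.1.1)

theorem ncard_le_of_twins_after (hσ : IsPCO G σ) {I : Set V}
    (htwin : ∀ v ∈ I, G.neighborSet v = N) (ha : a ∈ N) (hb : b ∈ N) (hba : b ≠ a)
    (hI : ∀ v ∈ I, σ a ≤ σ v) : I.ncard ≤ N.ncard := by
  have hadj : ∀ v ∈ I, ∀ w ∈ N, G.Adj v w := fun v hv w hw => by rwa [← htwin v hv] at hw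
  have hva : ∀ v ∈ I, v ≠ a := fun v hv h => G.irrefl (h ▸ hadj v hv a ha)
  have hIa : ∀ v ∈ I, σ a < σ v := fun v hv =>
    (hI v hv).lt_of_ne (σ.injective.ne (hva v hv)).symm
  let K := (G.induce {x | x ≠ a}).connectedComponentMk ⟨b, hba⟩
  have hIS : I ⊆ NPlus G σ a ∩ Subtype.val '' K.supp := fun v hv =>
    ⟨⟨(hadj v hv a ha).symm, hIa v hv⟩, ⟨_, SimpleGraph.ConnectedComponent.sound
      (SimpleGraph.induce_reachable_of_adj (hva v hv) _ (hadj v hv b hb)), rfl⟩⟩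
  have hcount := (hσ a K).ncard_le_ncard_add_one (T := N \ {a}) hIS
    fun v hv w _ hvw hvw' =>
      ⟨htwin v hv ▸ hvw', fun h => ((hIa v hv).trans hvw).ne' (congrArg σ h)⟩
  rwa [Set.ncard_sdiff_singleton_add_one ha] at hcount

end IsPCO

theorem stmt13_general {V : Type*} [Fintype V] (G : SimpleGraph V)
    (I : Set V) (NI : Set V)
    (htwin : ∀ a ∈ I, G.neighborSet a = NI)
    (hsize : NI.ncard ≤ I.ncard - 1)
    (σ : V ≃ Fin (Fintype.card V)) (hσ : IsPCO G σ) :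
    SigmaLinked G σ NI := by
  intro a b ha hb hab hgap
  have hNI : 1 ≤ NI.ncard := (Set.ncard_pos (Set.toFinite NI)).2 ⟨a, ha⟩
  by_cases hbefore : ∃ v ∈ I, σ v < σ a
  · obtain ⟨v, hv, hva⟩ := hbefore
    obtain ⟨u, hu, huv⟩ := Set.exists_ne_of_one_lt_ncard (s := I) (by omega) v
    exact hσ.adj_of_twins huv (htwin u hu).ge (htwin v hv) ha hb hva hab hgap
  · push Not at hbefore
    have hcount :=
      hσ.ncard_le_of_twins_after htwin ha hb (fun h => hab.ne' (congrArg σ h)) hbefore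
    omega

/-- If `I` is a nonempty set of false twins of `G` with common neighborhood `NI` and
`|NI| ≤ |I| − 1`, then `NI` is `σ`-linked in every perfect cancellation ordering `σ`
of `G`. -/
theorem stmt13 {V : Type*} [Fintype V] [DecidableEq V] (G : SimpleGraph V)
    (I : Set V) (hne : I.Nonempty) (NI : Set V)
    (htwin : ∀ a ∈ I, G.neighborSet a = NI)
    (hsize : NI.ncard ≤ I.ncard - 1)
    (σ : V ≃ Fin (Fintype.card V)) (hσ : IsPCO G σ) :
    SigmaLinked G σ NI :=
  stmt13_general G I NI htwin hsize σ hσ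
end

section
/- Let G be a finite simple graph on n vertices containing at least ⌊n/2⌋ universal vertices (vertices adjacent to every other vertex of G). Then G is a perfect cancellation graph. -/
theorem exists_equiv_fin_even_of_card_le {α : Type*} [Fintype α] (P : α → Prop) [DecidablePred P]
    (h : Fintype.card {a // P a} ≤ (Fintype.card α + 1) / 2) :
    ∃ σ : α ≃ Fin (Fintype.card α), ∀ a, P a → Even (σ a : ℕ) := by
  obtain ⟨f⟩ : Nonempty ({a // P a} ↪ Fin ((Fintype.card α + 1) / 2)) :=
    Function.Embedding.nonempty_of_card_le (by simpa using h)
  let double : Fin ((Fintype.card α + 1) / 2) → Fin (Fintype.card α) :=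
    fun i => ⟨2 * i, by omega⟩
  have double_injective : double.Injective := fun i j hij => by
    simpa [double, Fin.ext_iff] using hij
  let σ₀ := Fintype.equivFin α
  obtain ⟨π, hπ⟩ := Equiv.Perm.exists_extending_pair (fun a : {a // P a} => σ₀ a) (double ∘ f)
    (σ₀.injective.comp Subtype.val_injective) (double_injective.comp f.injective)
  exact ⟨σ₀.trans π, fun a ha => ⟨f ⟨a, ha⟩, by simp [hπ ⟨a, ha⟩, double, two_mul]⟩⟩

theorem exists_between_of_even {α : Type*} {n : ℕ} (σ : α ≃ Fin n) {P : α → Prop}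
    (hσ : ∀ a, ¬P a → Even (σ a : ℕ)) {a b : α} (hab : σ a < σ b) (ha : ¬P a) (hb : ¬P b) :
    ∃ w, P w ∧ σ a < σ w ∧ σ w < σ b := by
  obtain ⟨i, hi⟩ := hσ a ha
  obtain ⟨j, hj⟩ := hσ b hb
  have hab : (σ a : ℕ) < σ b := hab
  have hlt : (σ a : ℕ) + 1 < n := by omega
  refine ⟨σ.symm ⟨σ a + 1, hlt⟩, by_contra fun hw => ?_, ?_, ?_⟩
  · obtain ⟨k, hk⟩ := hσ _ hw
    simp only [Equiv.apply_symm_apply] at hk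
    omega
  · simp [Fin.lt_def]
  · simp only [Equiv.apply_symm_apply, Fin.lt_def]
    omega

theorem isPCO_of_exists_universal_between {V : Type*} [Fintype V] (G : SimpleGraph V)
    (σ : V ≃ Fin (Fintype.card V))
    (hσ : ∀ a b, σ a < σ b → ¬G.Adj a b → ∃ w, (∀ u, u ≠ w → G.Adj w u) ∧ σ a < σ w ∧ σ w < σ b) :
    IsPCO G σ := by
  rintro v K a b ⟨⟨hva, hσva⟩, a', ha'K, rfl⟩ ⟨-, b', -, rfl⟩ hab hmid
  by_contra hnadj
  obtain ⟨w, hw, haw, hwb⟩ := hσ _ _ hab hnadj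
  have hwv : w ≠ v := fun h => by subst h; exact lt_asymm hσva haw
  have hwK : (⟨w, hwv⟩ : {u : V | u ≠ v}) ∈ K.supp := by
    have hadj : (G.induce {u : V | u ≠ v}).Adj ⟨w, hwv⟩ a' := hw _ (fun h => haw.ne (h ▸ rfl))
    rwa [SimpleGraph.ConnectedComponent.mem_supp_iff,
      SimpleGraph.ConnectedComponent.sound hadj.reachable]
  exact hmid w ⟨⟨(hw v hwv.symm).symm, hσva.trans haw⟩, _, hwK, rfl⟩ ⟨haw, hwb⟩

theorem stmt14_general {V : Type*} [Fintype V] (G : SimpleGraph V)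
    (h : Fintype.card V / 2 ≤ Nat.card {v : V | ∀ u : V, u ≠ v → G.Adj v u}) :
    PerfectCancellationGraph G := by
  classical
  set IsUniversal := fun v : V => ∀ u : V, u ≠ v → G.Adj v u
  have hcard : Fintype.card {v // ¬IsUniversal v} ≤ (Fintype.card V + 1) / 2 := by
    have hU : Fintype.card V / 2 ≤ Fintype.card {v // IsUniversal v} :=
      h.trans_eq Nat.card_eq_fintype_card
    rw [Fintype.card_subtype_compl]
    omega
  obtain ⟨σ, hσ⟩ := exists_equiv_fin_even_of_card_le (fun v => ¬IsUniversal v) hcard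
  refine ⟨σ, isPCO_of_exists_universal_between G σ fun a b hab hnadj => ?_⟩
  have hne : a ≠ b := fun h => hab.ne (congrArg σ h)
  exact exists_between_of_even σ hσ hab (fun ha => hnadj (ha b hne.symm))
    (fun hb => hnadj (hb a hne).symm)

/-- A graph on `n` vertices with at least `⌊n/2⌋` universal vertices is a perfect
cancellation graph. -/
theorem stmt14 {V : Type*} [Fintype V] [DecidableEq V] (G : SimpleGraph V)
    (h : Fintype.card V / 2 ≤ Nat.card {v : V | ∀ u : V, u ≠ v → G.Adj v u}) :
    PerfectCancellationGraph G :=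
  stmt14_general G h
end

section
/- Let G₁ and G₂ be connected finite simple graphs whose vertex sets share exactly one common vertex v (V(G₁) ∩ V(G₂) = {v}), having n₁, n₂ vertices and m₁, m₂ edges respectively. Suppose G₁ admits a graphic parity network of size m₁ + n₁ − 1 and G₂ admits a graphic parity network of size m₂ + n₂ − 1. Then the union graph G = G₁ ∪ G₂ (on n₁ + n₂ − 1 vertices, with edge set E(G₁) ∪ E(G₂)) admits a graphic parity network of size (m₁ + m₂) + (n₁ + n₂ − 1) − 1. -/
/-- Let `G₁` and `G₂` be graphs on vertex sets `S₁` and `S₂` covering `V` and sharing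
exactly one vertex `v₀`, each connected, with `nᵢ` vertices and `mᵢ` edges.  If each
`Gᵢ` admits a graphic parity network of size `mᵢ + nᵢ − 1` (using only wires of `Sᵢ`),
then the union graph admits a graphic parity network of size
`(m₁ + m₂) + (n₁ + n₂ − 1) − 1`. -/
theorem stmt15 {V : Type*} [Fintype V] [DecidableEq V]
    (G₁ G₂ : SimpleGraph V) (S₁ S₂ : Set V) (v₀ : V)
    (hcover : S₁ ∪ S₂ = Set.univ) (hinter : S₁ ∩ S₂ = {v₀})
    (hE₁ : ∀ a b : V, G₁.Adj a b → a ∈ S₁ ∧ b ∈ S₁)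
    (hE₂ : ∀ a b : V, G₂.Adj a b → a ∈ S₂ ∧ b ∈ S₂)
    (hc₁ : (G₁.induce S₁).Connected) (hc₂ : (G₂.induce S₂).Connected)
    (C₁ : List (V × V)) (h₁ : IsGPN G₁ C₁)
    (hw₁ : ∀ g ∈ C₁, g.1 ∈ S₁ ∧ g.2 ∈ S₁)
    (hl₁ : C₁.length = Nat.card G₁.edgeSet + S₁.ncard - 1)
    (C₂ : List (V × V)) (h₂ : IsGPN G₂ C₂)
    (hw₂ : ∀ g ∈ C₂, g.1 ∈ S₂ ∧ g.2 ∈ S₂)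
    (hl₂ : C₂.length = Nat.card G₂.edgeSet + S₂.ncard - 1) :
    ∃ C : List (V × V), IsGPN (G₁ ⊔ G₂) C ∧
      C.length = (Nat.card G₁.edgeSet + Nat.card G₂.edgeSet) +
        (S₁.ncard + S₂.ncard - 1) - 1 := by

  refine ⟨C₁ ++ C₂, ⟨?_, ?_, ?_⟩, ?_⟩
  · intro g hg
    rcases List.mem_append.1 hg with h | h
    · exact h₁.1 g h
    · exact h₂.1 g h
  · have hrun1 : runCircuit C₁ = (fun v => ({v} : Finset V)) := funext h₁.2.2
    intro u v huv
    rcases huv with huv | huv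
    · obtain ⟨k, w, hk⟩ := h₁.2.1 u v huv
      refine ⟨min k C₁.length, w, ?_⟩
      rw [List.take_append]
      have h1 : C₁.take (min k C₁.length) = C₁.take k := by
        rcases le_total k C₁.length with h | h
        · rw [min_eq_left h]
        · rw [min_eq_right h, List.take_length, List.take_of_length_le h]
      have h2 : min k C₁.length - C₁.length = 0 := by omega
      rw [h1, h2, List.take_zero, List.append_nil]
      exact hk
    · obtain ⟨k, w, hk⟩ := h₂.2.1 u v huv
      refine ⟨C₁.length + k, w, ?_⟩
      rw [List.take_append, List.take_of_length_le (by omega),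
        Nat.add_sub_cancel_left]
      simp only [runCircuit, List.foldl_append]
      have h3 : List.foldl (fun t g => applyGate g t) (fun v => ({v} : Finset V)) C₁
          = fun v => ({v} : Finset V) := hrun1
      rw [h3]
      exact hk
  · intro v
    have hrun1 : runCircuit C₁ = (fun v => ({v} : Finset V)) := funext h₁.2.2
    simp only [runCircuit, List.foldl_append]
    have h3 : List.foldl (fun t g => applyGate g t) (fun v => ({v} : Finset V)) C₁
        = fun v => ({v} : Finset V) := hrun1
    rw [h3]
    exact h₂.2.2 v
  · have hv₁ : v₀ ∈ S₁ := by
      have : v₀ ∈ S₁ ∩ S₂ := by rw [hinter]; rfl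
      exact this.1
    have hv₂ : v₀ ∈ S₂ := by
      have : v₀ ∈ S₁ ∩ S₂ := by rw [hinter]; rfl
      exact this.2
    have hn₁ : 0 < S₁.ncard := (Set.ncard_pos (Set.toFinite _)).2 ⟨v₀, hv₁⟩
    have hn₂ : 0 < S₂.ncard := (Set.ncard_pos (Set.toFinite _)).2 ⟨v₀, hv₂⟩
    rw [List.length_append, hl₁, hl₂]
    omega
end

section
/- Let σ be a perfect cancellation ordering of a finite simple graph G and let B ⊆ V(G) be a biconnected component (block) of G, that is, a maximal vertex set such that the subgraph of G induced by B is connected and has no cut vertex (no vertex whose deletion disconnects the induced subgraph). Then the restriction of σ to B (the ordering of B induced by σ) is a perfect cancellation ordering of the induced subgraph G[B]. -/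
section PCOAux
open SimpleGraph

private lemma pco_reach_of_walk {V : Type*} (G : SimpleGraph V) (s : Set V) :
    ∀ {a b : V} (p : G.Walk a b), (∀ x ∈ p.support, x ∈ s) →
      ∀ (ha : a ∈ s) (hb : b ∈ s), (G.induce s).Reachable ⟨a, ha⟩ ⟨b, hb⟩ := by
  intro a b p
  induction p with
  | nil => intro _ ha hb; exact Reachable.refl _
  | @cons u c w h q ih =>
    intro hp ha hb
    have hc : c ∈ s := hp c (by simp)
    exact (Adj.reachable (show (G.induce s).Adj ⟨u, ha⟩ ⟨c, hc⟩ from h)).trans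
      (ih (fun x hx => hp x (by simp [hx])) hc hb)

private lemma pco_reach_mono {V : Type*} (G : SimpleGraph V) {s t : Set V} (hst : s ⊆ t)
    {a b : V} (ha : a ∈ s) (hb : b ∈ s)
    (h : (G.induce s).Reachable ⟨a, ha⟩ ⟨b, hb⟩) :
    (G.induce t).Reachable ⟨a, hst ha⟩ ⟨b, hst hb⟩ := by
  let f : G.induce s →g G.induce t :=
    ⟨fun x => ⟨x.1, hst x.2⟩, fun {u w} hadj => hadj⟩
  exact Reachable.map f h

private lemma pco_chain_lemma {V : Type*} (G : SimpleGraph V) {n : ℕ} (σ : V ≃ Fin n)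
    (U : Set V) (hU : SigmaLinked G σ U) :
    ∀ (m : ℕ) ⦃a b : V⦄, a ∈ U → b ∈ U → σ a < σ b → (σ b).val - (σ a).val ≤ m →
      ∃ p : G.Walk a b, ∀ x ∈ p.support, x ∈ U ∧ σ a ≤ σ x ∧ σ x ≤ σ b := by
  intro m
  induction m with
  | zero =>
    intro a b _ _ hlt hm
    have : (σ a).val < (σ b).val := hlt
    omega
  | succ m ih =>
    intro a b ha hb hlt hm
    by_cases hex : ∃ w ∈ U, σ a < σ w ∧ σ w < σ b
    · obtain ⟨w, hw, h1, h2⟩ := hex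
      have hv1 : (σ a).val < (σ w).val := h1
      have hv2 : (σ w).val < (σ b).val := h2
      obtain ⟨p, hp⟩ := ih ha hw h1 (by omega)
      obtain ⟨q, hq⟩ := ih hw hb h2 (by omega)
      refine ⟨p.append q, fun x hx => ?_⟩
      rw [SimpleGraph.Walk.support_append] at hx
      rcases List.mem_append.1 hx with hx | hx
      · obtain ⟨h1', h2', h3'⟩ := hp x hx
        exact ⟨h1', h2', le_trans h3' h2.le⟩
      · obtain ⟨h1', h2', h3'⟩ := hq x (List.mem_of_mem_tail hx)
        exact ⟨h1', le_trans h1.le h2', h3'⟩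
    · have hadj : G.Adj a b := hU ha hb hlt (fun w hw hcon => hex ⟨w, hw, hcon.1, hcon.2⟩)
      refine ⟨hadj.toWalk, fun x hx => ?_⟩
      have : x = a ∨ x = b := by
        simpa [SimpleGraph.Adj.toWalk] using hx
      rcases this with rfl | rfl
      · exact ⟨ha, le_refl _, hlt.le⟩
      · exact ⟨hb, hlt.le, le_refl _⟩

private lemma pco_block_absorb {V : Type*} [Fintype V] [DecidableEq V] (G : SimpleGraph V)
    (B : Finset V)
    (hconn : (G.induce (B : Set V)).Connected)
    (hnocut : ∀ v ∈ B, (G.induce ((B : Set V) \ {v})).Preconnected)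
    (hmax : ∀ B' : Finset V, B ⊆ B' → (G.induce (B' : Set V)).Connected →
      (∀ v ∈ B', (G.induce ((B' : Set V) \ {v})).Preconnected) → B' = B)
    {v a b : V} (hv : v ∈ B) (ha : a ∈ B) (hb : b ∈ B)
    (p : G.Walk a b) (hsup : ∀ x ∈ p.support, G.Adj v x) :
    ∀ x ∈ p.support, x ∈ B := by
  classical
  set B' : Finset V := B ∪ p.support.toFinset with hB'def
  have hmem : ∀ x : V, x ∈ (B' : Set V) ↔ x ∈ B ∨ x ∈ p.support := by
    intro x
    simp [hB'def]
  have hBsub : (B : Set V) ⊆ (B' : Set V) := fun x hx => (hmem x).2 (Or.inl hx)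
  have hvne : ∀ x ∈ p.support, x ≠ v := fun x hx => (hsup x hx).ne'
  have hv' : v ∈ (B' : Set V) := hBsub hv
  have haS : a ∈ p.support := p.start_mem_support
  have haB' : a ∈ (B' : Set V) := hBsub ha
  have hconn' : (G.induce (B' : Set V)).Connected := by
    have hub : ∀ x : (B' : Set V), (G.induce (B' : Set V)).Reachable x ⟨v, hv'⟩ := by
      rintro ⟨x, hx⟩
      rcases (hmem x).1 hx with hxB | hxS
      · exact pco_reach_mono G hBsub hxB hv (hconn.preconnected ⟨x, hxB⟩ ⟨v, hv⟩)
      · exact Adj.reachable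
          (show (G.induce (B' : Set V)).Adj ⟨x, hx⟩ ⟨v, hv'⟩ from (hsup x hxS).symm)
    exact (connected_iff _).2 ⟨fun x y => (hub x).trans (hub y).symm, ⟨⟨v, hv'⟩⟩⟩
  have hnocut' : ∀ w ∈ B', (G.induce ((B' : Set V) \ {w})).Preconnected := by
    intro w hw
    by_cases hwv : w = v
    · subst hwv
      have hane : a ≠ w := hvne a haS
      have haset : a ∈ (B' : Set V) \ {w} := ⟨haB', hane⟩
      have hub : ∀ x : ((B' : Set V) \ {w} : Set V),
          (G.induce ((B' : Set V) \ {w})).Reachable x ⟨a, haset⟩ := by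
        rintro ⟨x, hx, hxw⟩
        rcases (hmem x).1 hx with hxB | hxS
        · have hxB2 : x ∈ (B : Set V) \ {w} := ⟨hxB, hxw⟩
          have hsub2 : (B : Set V) \ {w} ⊆ (B' : Set V) \ {w} :=
            fun z hz => ⟨hBsub hz.1, hz.2⟩
          exact pco_reach_mono G hsub2 hxB2 ⟨ha, hane⟩ (hnocut w hv ⟨x, hxB2⟩ ⟨a, ha, hane⟩)
        · have : (G.induce ((B' : Set V) \ {w})).Reachable ⟨a, haset⟩ ⟨x, hx, hxw⟩ := by
            refine pco_reach_of_walk G _ (p.takeUntil x hxS) (fun z hz => ?_) haset ⟨hx, hxw⟩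
            have hzS : z ∈ p.support := p.support_takeUntil_subset hxS hz
            exact ⟨(hmem z).2 (Or.inr hzS), hvne z hzS⟩
          exact this.symm
      exact fun x y => (hub x).trans (hub y).symm
    · have hvset : v ∈ (B' : Set V) \ {w} := ⟨hv', fun h => hwv (h.symm ▸ rfl)⟩
      have hub : ∀ x : ((B' : Set V) \ {w} : Set V),
          (G.induce ((B' : Set V) \ {w})).Reachable x ⟨v, hvset⟩ := by
        rintro ⟨x, hx, hxw⟩
        rcases (hmem x).1 hx with hxB | hxS
        · by_cases hwB : w ∈ B
          · have hsub2 : (B : Set V) \ {w} ⊆ (B' : Set V) \ {w} :=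
              fun z hz => ⟨hBsub hz.1, hz.2⟩
            exact pco_reach_mono G hsub2 ⟨hxB, hxw⟩ ⟨hv, hvset.2⟩
              (hnocut w hwB ⟨x, hxB, hxw⟩ ⟨v, hv, hvset.2⟩)
          · have hsub2 : (B : Set V) ⊆ (B' : Set V) \ {w} :=
              fun z hz => ⟨hBsub hz, fun h => hwB (Set.mem_singleton_iff.1 h ▸ hz)⟩
            exact pco_reach_mono G hsub2 hxB hv (hconn.preconnected ⟨x, hxB⟩ ⟨v, hv⟩)
        · exact Adj.reachable
            (show (G.induce ((B' : Set V) \ {w})).Adj ⟨x, hx, hxw⟩ ⟨v, hvset⟩ from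
              (hsup x hxS).symm)
      exact fun x y => (hub x).trans (hub y).symm
  have hkey : B' = B := hmax B' (Finset.subset_union_left) hconn' hnocut'
  intro x hx
  have : x ∈ B' := Finset.mem_union_right _ (List.mem_toFinset.2 hx)
  rwa [hkey] at this

end PCOAux


/-- If `σ` is a perfect cancellation ordering of `G` and `B` is a block (a maximal
vertex set inducing a connected subgraph without cut vertices) of `G`, then the
restriction of `σ` to `B` is a perfect cancellation ordering of `G[B]`. -/
theorem stmt16 {V : Type*} [Fintype V] [DecidableEq V] (G : SimpleGraph V)
    (σ : V ≃ Fin (Fintype.card V)) (hσ : IsPCO G σ) (B : Finset V)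
    (hconn : (G.induce (B : Set V)).Connected)
    (hnocut : ∀ v ∈ B, (G.induce ((B : Set V) \ {v})).Preconnected)
    (hmax : ∀ B' : Finset V, B ⊆ B' → (G.induce (B' : Set V)).Connected →
      (∀ v ∈ B', (G.induce ((B' : Set V) \ {v})).Preconnected) → B' = B) :
    ∃ τ : (B : Set V) ≃ Fin (Fintype.card (B : Set V)),
      (∀ x y : (B : Set V), τ x < τ y ↔ σ x.val < σ y.val) ∧
      IsPCO (G.induce (B : Set V)) τ := by
  classical
  letI : LinearOrder (B : Set V) := LinearOrder.lift' (fun x => σ x.val)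
    (fun x y h => Subtype.ext (σ.injective h))
  let τ : (B : Set V) ≃o Fin (Fintype.card (B : Set V)) := (monoEquivOfFin _ rfl).symm
  have hτ : ∀ x y : (B : Set V), τ.toEquiv x < τ.toEquiv y ↔ σ x.val < σ y.val := by
    intro x y
    rw [show (τ.toEquiv x : Fin _) = τ x from rfl, show (τ.toEquiv y : Fin _) = τ y from rfl,
      OrderIso.lt_iff_lt]
    exact Iff.rfl
  refine ⟨τ.toEquiv, hτ, ?_⟩
  intro vB K'
  obtain ⟨v, hvB⟩ := vB
  intro a b haU hbU hab hno
  obtain ⟨av, haB⟩ := a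
  obtain ⟨bv, hbB⟩ := b
  obtain ⟨haN, ham⟩ := haU
  obtain ⟨hbN, hbm⟩ := hbU
  obtain ⟨hadjA, hltA⟩ := haN
  obtain ⟨hadjB, hltB⟩ := hbN
  have hGa : G.Adj v av := hadjA
  have hGb : G.Adj v bv := hadjB
  have hsa : σ v < σ av := (hτ _ _).1 hltA
  have hsb : σ v < σ bv := (hτ _ _).1 hltB
  have hsab : σ av < σ bv := (hτ _ _).1 hab
  have hane : av ≠ v := hGa.ne'
  have hbne : bv ≠ v := hGb.ne'
  have hvmem : v ∈ B := hvB
  set K0 := (SimpleGraph.induce {u : V | u ≠ v} G).connectedComponentMk ⟨av, hane⟩ with hK0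
  have hU := hσ v K0
  have hr : (SimpleGraph.induce {u : V | u ≠ v} G).Reachable ⟨av, hane⟩ ⟨bv, hbne⟩ := by
    have h1 := hnocut v hvmem ⟨av, haB, hane⟩ ⟨bv, hbB, hbne⟩
    have hsub : ((B : Set V) \ {v}) ⊆ {u : V | u ≠ v} := fun z hz => hz.2
    exact pco_reach_mono G hsub ⟨haB, hane⟩ ⟨hbB, hbne⟩ h1
  have hamem : av ∈ NPlus G σ v ∩ (Subtype.val '' K0.supp) :=
    ⟨⟨hGa, hsa⟩, ⟨⟨av, hane⟩, rfl, rfl⟩⟩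
  have hbmem : bv ∈ NPlus G σ v ∩ (Subtype.val '' K0.supp) :=
    ⟨⟨hGb, hsb⟩, ⟨⟨bv, hbne⟩, (SimpleGraph.ConnectedComponent.sound hr).symm, rfl⟩⟩
  obtain ⟨p, hp⟩ := pco_chain_lemma G σ _ hU ((σ bv).val - (σ av).val) hamem hbmem hsab le_rfl
  have hsupadj : ∀ x ∈ p.support, G.Adj v x := by
    intro x hx
    obtain ⟨⟨⟨h1, -⟩, -⟩, -⟩ := hp x hx
    exact h1
  have hsuppB : ∀ x ∈ p.support, x ∈ B :=
    pco_block_absorb G B hconn hnocut hmax hvmem haB hbB p hsupadj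
  have hsupp2 : ∀ x ∈ p.support, x = av ∨ x = bv := by
    intro x hx
    by_contra hcon
    push_neg at hcon
    obtain ⟨hxa, hxb⟩ := hcon
    obtain ⟨hxU, hge, hle⟩ := hp x hx
    obtain ⟨⟨hGx, hsx⟩, -⟩ := hxU
    have hlt1 : σ av < σ x := lt_of_le_of_ne hge (fun h => hxa (σ.injective h).symm)
    have hlt2 : σ x < σ bv := lt_of_le_of_ne hle (fun h => hxb (σ.injective h))
    have hxB : x ∈ B := hsuppB x hx
    have hxB' : x ∈ (B : Set V) := hxB
    have hxnev : x ≠ v := hGx.ne'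
    obtain ⟨ahat, hahatsupp, hahatval⟩ := ham
    have hrx : (SimpleGraph.induce ((B : Set V) \ {v}) G).Reachable
        ⟨x, hxB', hxnev⟩ ⟨av, haB, hane⟩ :=
      hnocut v hvmem _ _
    let f : SimpleGraph.induce ((B : Set V) \ {v}) G →g
        SimpleGraph.induce {u : (B : Set V) | u ≠ (⟨v, hvB⟩ : (B : Set V))}
          (SimpleGraph.induce (B : Set V) G) :=
      ⟨fun z => ⟨⟨z.1, z.2.1⟩, fun h => z.2.2 (congrArg Subtype.val h)⟩, fun {u w} had => had⟩
    have hrx2 := SimpleGraph.Reachable.map f hrx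
    have hend : f ⟨av, haB, hane⟩ = ahat := Subtype.ext hahatval.symm
    rw [hend] at hrx2
    have hmk : f ⟨x, hxB', hxnev⟩ ∈ K'.supp := by
      rw [SimpleGraph.ConnectedComponent.mem_supp_iff,
        SimpleGraph.ConnectedComponent.sound hrx2]
      exact (SimpleGraph.ConnectedComponent.mem_supp_iff _ _).1 hahatsupp
    refine hno ⟨x, hxB'⟩ ⟨⟨hGx, (hτ _ _).2 hsx⟩, ⟨f ⟨x, hxB', hxnev⟩, hmk, rfl⟩⟩
      ⟨(hτ _ _).2 hlt1, (hτ _ _).2 hlt2⟩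
  have havbv : av ≠ bv := fun h => absurd hsab (by rw [h]; exact lt_irrefl _)
  have hGab : G.Adj av bv := by
    cases p with
    | nil => exact absurd rfl havbv
    | @cons _ c _ h q =>
      have hc : c ∈ (SimpleGraph.Walk.cons h q).support := by
        rw [SimpleGraph.Walk.support_cons]
        exact List.mem_cons_of_mem _ q.start_mem_support
      rcases hsupp2 c hc with rfl | rfl
      · exact absurd rfl h.ne
      · exact h
  exact hGab
end

section
/- Let G be a connected finite simple graph with n vertices and m edges, and let C be a graphic parity network for G of size exactly m + n − 1 (a perfect graphic parity network). Then there exists a wire w ∈ V(G) that is not the target of any gate of C. -/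
/-! If every wire were the target of some gate, consider for each gate the term it writes on its
target. Every edge `{u, v}` is such a term (the term of a wire differs from its initial singleton
only once a gate has written it), and so is every `{v}` (written by the last gate targeting `v`,
since the circuit ends in the initial state). These `m + n` terms are pairwise distinct, so the
circuit has at least `m + n` gates. -/

section

variable {V : Type*} [DecidableEq V]

theorem Sym2.toFinset_injective : Function.Injective (Sym2.toFinset : Sym2 V → Finset V) :=
  fun z z' h => Sym2.ext fun x => by rw [← Sym2.mem_toFinset, h, Sym2.mem_toFinset]

def writtenTerm (C : List (V × V)) (i : Fin C.length) : Finset V :=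
  runCircuit (C.take (i + 1)) C[i].2

theorem runCircuit_take_succ (C : List (V × V)) {k : ℕ} (hk : k < C.length) :
    runCircuit (C.take (k + 1)) = applyGate C[k] (runCircuit (C.take k)) := by
  rw [runCircuit, ← List.take_concat_get' C k hk, List.foldl_append]
  rfl

theorem runCircuit_take_succ_apply_of_not_target (C : List (V × V)) {k : ℕ} {w : V}
    (hw : ∀ hk : k < C.length, C[k].2 ≠ w) :
    runCircuit (C.take (k + 1)) w = runCircuit (C.take k) w := by
  by_cases hk : k < C.length
  · rw [runCircuit_take_succ C hk, applyGate, if_neg (hw hk).symm]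
  · rw [List.take_of_length_le (by omega), List.take_of_length_le (by omega)]

theorem runCircuit_take_apply_of_not_target (C : List (V × V)) {k : ℕ} {w : V}
    (hw : ∀ i : Fin C.length, i < k → C[i].2 ≠ w) :
    runCircuit (C.take k) w = {w} := by
  induction k with
  | zero => rfl
  | succ k ih =>
    rw [runCircuit_take_succ_apply_of_not_target C fun hk => hw ⟨k, hk⟩ k.lt_succ_self]
    exact ih fun i hi => hw i (by omega)

theorem exists_writtenTerm_eq_runCircuit_take (C : List (V × V)) {k : ℕ} {w : V}
    (hw : ∃ i : Fin C.length, i < k ∧ C[i].2 = w) :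
    ∃ i : Fin C.length, writtenTerm C i = runCircuit (C.take k) w := by
  induction k with
  | zero => simp at hw
  | succ k ih =>
    by_cases hkw : ∃ hk : k < C.length, C[k].2 = w
    · obtain ⟨hk, rfl⟩ := hkw
      exact ⟨⟨k, hk⟩, rfl⟩
    · push Not at hkw
      rw [runCircuit_take_succ_apply_of_not_target C hkw]
      obtain ⟨i, hik, rfl⟩ := hw
      refine ih ⟨i, lt_of_le_of_ne (Nat.le_of_lt_succ hik) fun hik' => ?_, rfl⟩
      exact hkw (hik' ▸ i.isLt) (by simp [← hik'])

theorem exists_writtenTerm_eq_of_ne_singleton (C : List (V × V)) {k : ℕ} {w : V}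
    (hw : runCircuit (C.take k) w ≠ {w}) :
    ∃ i : Fin C.length, writtenTerm C i = runCircuit (C.take k) w := by
  refine exists_writtenTerm_eq_runCircuit_take C ?_
  by_contra! h
  exact hw (runCircuit_take_apply_of_not_target C h)

theorem exists_writtenTerm_eq_runCircuit (C : List (V × V)) {w : V} (hw : ∃ g ∈ C, g.2 = w) :
    ∃ i : Fin C.length, writtenTerm C i = runCircuit C w := by
  obtain ⟨g, hg, rfl⟩ := hw
  obtain ⟨i, rfl⟩ := List.get_of_mem hg
  simpa using exists_writtenTerm_eq_runCircuit_take C (k := C.length) ⟨i, i.isLt, rfl⟩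

def edgeOrVertexTerm (G : SimpleGraph V) : G.edgeSet ⊕ V → Finset V :=
  Sum.elim (fun e => e.1.toFinset) fun v => {v}

theorem edgeOrVertexTerm_injective (G : SimpleGraph V) :
    Function.Injective (edgeOrVertexTerm G) := by
  have hcard (e : G.edgeSet) : e.1.toFinset.card = 2 :=
    Sym2.card_toFinset_of_not_isDiag _ (G.not_isDiag_of_mem_edgeSet e.2)
  rintro (e | v) (e' | v') h <;> simp only [edgeOrVertexTerm, Sum.elim_inl, Sum.elim_inr] at h
  · exact congrArg Sum.inl (Subtype.ext (Sym2.toFinset_injective h))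
  · simpa [h] using hcard e
  · simpa [← h] using hcard e'
  · exact congrArg Sum.inr (Finset.singleton_injective h)

theorem card_edgeSet_add_card_le_length [Fintype V] {G : SimpleGraph V} {C : List (V × V)}
    (h : IsGPN G C) (htarget : ∀ w : V, ∃ g ∈ C, g.2 = w) :
    Nat.card G.edgeSet + Fintype.card V ≤ C.length := by
  have hwritten : ∀ x, ∃ i : Fin C.length, writtenTerm C i = edgeOrVertexTerm G x := by
    rintro (⟨e, he⟩ | v)
    · induction e using Sym2.inductionOn with | hf u v => ?_
      obtain ⟨k, w, hw⟩ := h.2.1 u v he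
      have hne : runCircuit (C.take k) w ≠ {w} := fun h1 => by
        have hpair := Finset.card_pair (G.ne_of_adj he)
        rw [← hw, h1, Finset.card_singleton] at hpair
        omega
      simpa [edgeOrVertexTerm, Sym2.toFinset_mk_eq, hw] using
        exists_writtenTerm_eq_of_ne_singleton C hne
    · simpa [edgeOrVertexTerm, h.2.2 v] using exists_writtenTerm_eq_runCircuit C (htarget v)
  choose φ hφ using hwritten
  have hφinj : Function.Injective φ :=
    Function.Injective.of_comp (f := writtenTerm C)
      (by simpa [Function.comp_def, hφ] using edgeOrVertexTerm_injective G)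
  simpa [Nat.card_sum] using Nat.card_le_card_of_injective φ hφinj

end

/-- If `G` is connected with `n` vertices and `m` edges and `C` is a perfect graphic
parity network for `G` (its size is exactly `m + n − 1`), then some wire is not the
target of any gate of `C`. -/
theorem stmt19 {V : Type*} [Fintype V] [DecidableEq V] (G : SimpleGraph V)
    (hconn : G.Connected) (C : List (V × V)) (h : IsGPN G C)
    (hsize : C.length = Nat.card G.edgeSet + Fintype.card V - 1) :
    ∃ w : V, ∀ g ∈ C, g.2 ≠ w := by
  by_contra! htarget
  have hbound := card_edgeSet_add_card_le_length h htarget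
  have : Nonempty V := hconn.nonempty
  have : 0 < Fintype.card V := Fintype.card_pos
  omega
end
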